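/- arXiv:2202.12536 — 10 statements merged into one kernel-verified Lean document; each statement's English description precedes it below -/
import Mathlib

section
/- For every integer t ≥ 1, the complement of the perfect matching tK₂ (the graph on 2t vertices whose non-edges form a perfect matching) is not (t−1)-thin. -/
/-!
Order the two vertices of each non-edge `{(i,0), (i,1)}` as `lo i < hi i`. If `lo i < lo j` lay
in the same part with `i ≠ j`, then `lo i` is adjacent to `hi j`, so thinness would force the
non-edge `lo j hi j` to be an edge. Hence `i ↦ part (lo i)` is injective and at least `t` parts
are needed.
-/

/-- The complement of the perfect matching `tK₂`: vertices are `Fin t × Fin 2`,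
with an edge between `(i,a)` and `(j,b)` iff `i ≠ j`. -/
def matchingComplement (t : ℕ) : SimpleGraph (Fin t × Fin 2) :=
  SimpleGraph.fromRel (fun p q => p.1 ≠ q.1)

/-- A graph is `k`-thin if there are a partition of the vertices into `k` parts
(given by `c`) and a linear order on the vertices (given by an injection `f` into `ℕ`)
such that whenever `u < v < w` and `u, v` lie in the same part, `uw ∈ E` implies `vw ∈ E`. -/
def IsKThin {V : Type*} (G : SimpleGraph V) (k : ℕ) : Prop :=
  ∃ (c : V → Fin k) (f : V → ℕ), Function.Injective f ∧
    ∀ u v w : V, f u < f v → f v < f w → c u = c v → G.Adj u w → G.Adj v w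

@[simp]
theorem matchingComplement_adj {t : ℕ} {p q : Fin t × Fin 2} :
    (matchingComplement t).Adj p q ↔ p.1 ≠ q.1 := by
  rw [matchingComplement, SimpleGraph.fromRel_adj]
  constructor
  · rintro ⟨-, h | h⟩
    exacts [h, Ne.symm h]
  · intro h
    exact ⟨fun hpq => h (congrArg Prod.fst hpq), Or.inl h⟩

theorem exists_ordered_pair_of_injective {t : ℕ} {f : Fin t × Fin 2 → ℕ}
    (hf : Function.Injective f) (i : Fin t) :
    ∃ lo hi : Fin t × Fin 2, lo.1 = i ∧ hi.1 = i ∧ f lo < f hi := by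
  have hne : f (i, 0) ≠ f (i, 1) := hf.ne (by simp)
  rcases hne.lt_or_gt with h | h
  exacts [⟨_, _, rfl, rfl, h⟩, ⟨_, _, rfl, rfl, h⟩]

theorem le_of_isKThin_matchingComplement {t k : ℕ} (h : IsKThin (matchingComplement t) k) :
    t ≤ k := by
  obtain ⟨c, f, hf, hthin⟩ := h
  choose lo hi hlo hhi hlt using exists_ordered_pair_of_injective hf
  have not_lt_of_samePart : ∀ i j, c (lo i) = c (lo j) → ¬ f (lo i) < f (lo j) := by
    intro i j hc hij
    have hne : i ≠ j := by rintro rfl; exact hij.false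
    have hadj : (matchingComplement t).Adj (lo i) (hi j) := by simpa [hlo, hhi] using hne
    simpa [hlo, hhi] using hthin _ _ _ hij (hlt j) hc hadj
  have hinj : Function.Injective (c ∘ lo) := by
    intro i j hc
    have hf_eq : f (lo i) = f (lo j) :=
      le_antisymm (not_lt.1 (not_lt_of_samePart j i hc.symm))
        (not_lt.1 (not_lt_of_samePart i j hc))
    rw [← hlo i, ← hlo j, hf hf_eq]
  simpa using Fintype.card_le_of_injective _ hinj

theorem matchingComplement_not_thin (t : ℕ) (ht : 1 ≤ t) :
    ¬ IsKThin (matchingComplement t) (t - 1) := fun h => by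
  have := le_of_isKThin_matchingComplement h
  omega
end

section
/- Let m, n ≥ 1 and let G be the (m × n)-grid graph. Partition V(G) = {1,…,m} × {1,…,n} into three parts V₁, V₂, V₃ where V_i = {(a,b) : a ≡ i (mod 3)}. For each 1 ≤ i ≤ j ≤ 3, define the relation (a,b) ≤_{ij} (c,d) on V_i ∪ V_j by: a < c−1, or (|a−c| ≤ 1 and b < d), or (a ∈ {c−1, c} and b = d). Then each ≤_{ij} is a linear order on V_i ∪ V_j, and these orders witness that G is an inversion-free proper 3-mixed-thin graph: for every 1 ≤ i ≤ j ≤ 3 and every triple u ≤_{ij} v ≤_{ij} w (all distinct) with two of them in the same part among {V_i, V_j} as required below, (b) if u,v lie in one part, w in the other (or the same, when i = j), and uw ∈ E(G), then vw ∈ E(G); and (c) if v,w lie in one part, u in the other, and uw ∈ E(G), then uv ∈ E(G). -/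
/-- The `(m × n)`-grid graph on `Fin m × Fin n` (coordinates `1,…,m` shifted to `0,…,m-1`):
edges between vertices at `L¹`-distance 1. -/
def gridGraph (m n : ℕ) : SimpleGraph (Fin m × Fin n) :=
  SimpleGraph.fromRel (fun p q =>
    (((p.1 : ℕ) + 1 = (q.1 : ℕ) ∨ (q.1 : ℕ) + 1 = (p.1 : ℕ)) ∧ p.2 = q.2) ∨
    (((p.2 : ℕ) + 1 = (q.2 : ℕ) ∨ (q.2 : ℕ) + 1 = (p.2 : ℕ)) ∧ p.1 = q.1))

/-- Part of a vertex: the residue mod 3 of its first (1-based) coordinate. -/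
def gridPart {m n : ℕ} (v : Fin m × Fin n) : ℕ := ((v.1 : ℕ) + 1) % 3

/-- The order `(a,b) ≤ (c,d)` iff `a < c−1`, or (`|a−c| ≤ 1` and `b < d`),
or (`a ∈ {c−1,c}` and `b = d`); stated on the 0-based coordinates (shift-invariant). -/
def gridLe {m n : ℕ} (u v : Fin m × Fin n) : Prop :=
  (u.1 : ℕ) + 1 < (v.1 : ℕ) ∨
  (((u.1 : ℕ) ≤ (v.1 : ℕ) + 1 ∧ (v.1 : ℕ) ≤ (u.1 : ℕ) + 1) ∧ (u.2 : ℕ) < (v.2 : ℕ)) ∨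
  (((u.1 : ℕ) + 1 = (v.1 : ℕ) ∨ (u.1 : ℕ) = (v.1 : ℕ)) ∧ (u.2 : ℕ) = (v.2 : ℕ))

/-! `gridLe` compares vertices in rows at least two apart by row, and vertices in equal or
neighbouring rows by column. It is total and antisymmetric, and it is transitive on every triple
of vertices that does not meet three consecutive rows, in particular on `V_i ∪ V_j`. For (b) and
(c), two vertices of one part lie in the same row or at least three rows apart, and a short case
check on rows shows that `u ≤ v ≤ w` with `uw` an edge forces the required edge. -/

lemma gridGraph_adj_iff {m n : ℕ} (u v : Fin m × Fin n) :
    (gridGraph m n).Adj u v ↔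
      (((u.1 : ℕ) + 1 = v.1 ∨ (v.1 : ℕ) + 1 = u.1) ∧ (u.2 : ℕ) = v.2) ∨
      (((u.2 : ℕ) + 1 = v.2 ∨ (v.2 : ℕ) + 1 = u.2) ∧ (u.1 : ℕ) = v.1) := by
  simp only [gridGraph, SimpleGraph.fromRel_adj, ne_eq, Prod.ext_iff, Fin.ext_iff]
  omega

section gridLe

variable {m n : ℕ} {u v w : Fin m × Fin n}

lemma gridLe_refl (u : Fin m × Fin n) : gridLe u u :=
  Or.inr (Or.inr ⟨Or.inr rfl, rfl⟩)

lemma gridLe_antisymm (huv : gridLe u v) (hvu : gridLe v u) : u = v := by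
  simp only [gridLe] at huv hvu
  ext <;> omega

lemma gridLe_total (u v : Fin m × Fin n) : gridLe u v ∨ gridLe v u := by
  simp only [gridLe]
  omega

/-- Without the hypothesis on parts this fails on three consecutive rows:
`(a+2, 0) ≤ (a+1, 1) ≤ (a, 2)` but `(a+2, 0) ≰ (a, 2)`. -/
lemma gridLe_trans
    (hpart : gridPart u = gridPart v ∨ gridPart v = gridPart w ∨ gridPart u = gridPart w)
    (huv : gridLe u v) (hvw : gridLe v w) : gridLe u w := by
  simp only [gridLe, gridPart] at *
  omega

lemma gridGraph_adj_right_of_gridLe_of_gridPart_eq (hpart : gridPart u = gridPart v)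
    (huv : gridLe u v) (huv' : u ≠ v) (hvw : gridLe v w) (hvw' : v ≠ w)
    (huw : (gridGraph m n).Adj u w) : (gridGraph m n).Adj v w := by
  simp only [gridGraph_adj_iff, gridLe, gridPart, ne_eq, Prod.ext_iff, Fin.ext_iff] at *
  omega

lemma gridGraph_adj_left_of_gridLe_of_gridPart_eq (hpart : gridPart v = gridPart w)
    (huv : gridLe u v) (huv' : u ≠ v) (hvw : gridLe v w) (hvw' : v ≠ w)
    (huw : (gridGraph m n).Adj u w) : (gridGraph m n).Adj u v := by
  simp only [gridGraph_adj_iff, gridLe, gridPart, ne_eq, Prod.ext_iff, Fin.ext_iff] at *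
  omega

end gridLe

theorem gridGraph_invFree_proper_three_mixed_thin_general (m n : ℕ) (i j : ℕ) :
    -- `≤_{ij}` is a linear order on `V_i ∪ V_j`
    ((∀ u : Fin m × Fin n, (gridPart u = i % 3 ∨ gridPart u = j % 3) → gridLe u u) ∧
     (∀ u v : Fin m × Fin n, (gridPart u = i % 3 ∨ gridPart u = j % 3) →
        (gridPart v = i % 3 ∨ gridPart v = j % 3) → gridLe u v → gridLe v u → u = v) ∧
     (∀ u v w : Fin m × Fin n, (gridPart u = i % 3 ∨ gridPart u = j % 3) →
        (gridPart v = i % 3 ∨ gridPart v = j % 3) →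
        (gridPart w = i % 3 ∨ gridPart w = j % 3) →
        gridLe u v → gridLe v w → gridLe u w) ∧
     (∀ u v : Fin m × Fin n, (gridPart u = i % 3 ∨ gridPart u = j % 3) →
        (gridPart v = i % 3 ∨ gridPart v = j % 3) → gridLe u v ∨ gridLe v u)) ∧
    -- condition (b)
    (∀ u v w : Fin m × Fin n,
      ((gridPart u = i % 3 ∧ gridPart v = i % 3 ∧ gridPart w = j % 3) ∨
       (gridPart u = j % 3 ∧ gridPart v = j % 3 ∧ gridPart w = i % 3)) →
      gridLe u v → u ≠ v → gridLe v w → v ≠ w →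
      (gridGraph m n).Adj u w → (gridGraph m n).Adj v w) ∧
    -- condition (c)
    (∀ u v w : Fin m × Fin n,
      ((gridPart v = i % 3 ∧ gridPart w = i % 3 ∧ gridPart u = j % 3) ∨
       (gridPart v = j % 3 ∧ gridPart w = j % 3 ∧ gridPart u = i % 3)) →
      gridLe u v → u ≠ v → gridLe v w → v ≠ w →
      (gridGraph m n).Adj u w → (gridGraph m n).Adj u v) := by
  refine ⟨⟨fun u _ => gridLe_refl u, fun u v _ _ => gridLe_antisymm, ?_,
    fun u v _ _ => gridLe_total u v⟩, ?_, ?_⟩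
  · intro u v w hu hv hw
    apply gridLe_trans
    rcases hu with hu | hu <;> rcases hv with hv | hv <;> rcases hw with hw | hw <;> omega
  · rintro u v w (⟨hu, hv, -⟩ | ⟨hu, hv, -⟩) <;>
      exact gridGraph_adj_right_of_gridLe_of_gridPart_eq (hu.trans hv.symm)
  · rintro u v w (⟨hv, hw, -⟩ | ⟨hv, hw, -⟩) <;>
      exact gridGraph_adj_left_of_gridLe_of_gridPart_eq (hv.trans hw.symm)

/-- The partition `V₁, V₂, V₃` by first coordinate mod 3 and the orders `≤_{ij} = gridLe`
witness that the `(m × n)`-grid is inversion-free proper 3-mixed-thin (with all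
`E_{i,j} = E`): each `≤_{ij}` is a linear order on `V_i ∪ V_j`, and conditions (b), (c)
of Definition 1 hold. -/
theorem gridGraph_invFree_proper_three_mixed_thin (m n : ℕ) (hm : 1 ≤ m) (hn : 1 ≤ n)
    (i j : ℕ) (hi : 1 ≤ i) (hij : i ≤ j) (hj : j ≤ 3) :
    -- `≤_{ij}` is a linear order on `V_i ∪ V_j`
    ((∀ u : Fin m × Fin n, (gridPart u = i % 3 ∨ gridPart u = j % 3) → gridLe u u) ∧
     (∀ u v : Fin m × Fin n, (gridPart u = i % 3 ∨ gridPart u = j % 3) →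
        (gridPart v = i % 3 ∨ gridPart v = j % 3) → gridLe u v → gridLe v u → u = v) ∧
     (∀ u v w : Fin m × Fin n, (gridPart u = i % 3 ∨ gridPart u = j % 3) →
        (gridPart v = i % 3 ∨ gridPart v = j % 3) →
        (gridPart w = i % 3 ∨ gridPart w = j % 3) →
        gridLe u v → gridLe v w → gridLe u w) ∧
     (∀ u v : Fin m × Fin n, (gridPart u = i % 3 ∨ gridPart u = j % 3) →
        (gridPart v = i % 3 ∨ gridPart v = j % 3) → gridLe u v ∨ gridLe v u)) ∧
    -- condition (b)
    (∀ u v w : Fin m × Fin n,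
      ((gridPart u = i % 3 ∧ gridPart v = i % 3 ∧ gridPart w = j % 3) ∨
       (gridPart u = j % 3 ∧ gridPart v = j % 3 ∧ gridPart w = i % 3)) →
      gridLe u v → u ≠ v → gridLe v w → v ≠ w →
      (gridGraph m n).Adj u w → (gridGraph m n).Adj v w) ∧
    -- condition (c)
    (∀ u v w : Fin m × Fin n,
      ((gridPart v = i % 3 ∧ gridPart w = i % 3 ∧ gridPart u = j % 3) ∨
       (gridPart v = j % 3 ∧ gridPart w = j % 3 ∧ gridPart u = i % 3)) →
      gridLe u v → u ≠ v → gridLe v w → v ≠ w →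
      (gridGraph m n).Adj u w → (gridGraph m n).Adj u v) :=
  gridGraph_invFree_proper_three_mixed_thin_general m n i j
end

section
/- For every m, r with m > 1, the complete rooted m-ary tree of height h has thinness at least c·h for some constant c > 0 depending only on m; in particular, the thinness of the complete m-ary tree is unbounded as h → ∞. -/
/-- The complete `m`-ary rooted tree of height `h`: vertices are the sequences over
`Fin m` of length at most `h` (the root is the empty sequence), with edges between each
vertex and its children (obtained by prepending one letter). -/
def completeMaryTree (m h : ℕ) : SimpleGraph {l : List (Fin m) // l.length ≤ h} :=
  SimpleGraph.fromRel (fun x y => ∃ a : Fin m, y.val = a :: x.val)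

/-!
Fix a thin ordering `(c, f)` and a threshold `θ`, and call a family of pairs `(uᵢ, wᵢ)` with
`f uᵢ ≤ θ < f wᵢ`, in which `uⱼ wᵢ` is an edge exactly when `i = j`, a cut matching. Two of the
`uᵢ` cannot share a part: if `f uᵢ < f uⱼ`, thinness applied to `uᵢ < uⱼ < wᵢ` would give the edge
`uⱼ wᵢ`. So the thinness is at least the size of a cut matching present in every ordering.

In the complete `m`-ary tree, every ordering has a cut matching of size `n + 1` inside every
subtree of height `3n + 1`. For the inductive step take three distinct grandchildren `g₁, g₂, g₃`
of the subtree root `r` (possible as `m ≥ 2`) and a child of each, and order the matchings of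
these three subtrees by threshold, `θ₁ ≤ θ₂ ≤ θ₃`. Some vertex below `g₁` lies at or before `θ₂`
and some vertex below `g₃` lies after it, so the path from `r` to one of them has an edge
crossing `θ₂`. Such a path never meets `g₂`, the only vertex outside the middle subtree that is
adjacent to it, so this edge extends the middle matching.
-/

open List

namespace SimpleGraph

variable {V ι : Type*} {G : SimpleGraph V}

def IsCutMatching (G : SimpleGraph V) (f : V → ℕ) (θ : ℕ) (u w : ι → V) : Prop :=
  (∀ i, f (u i) ≤ θ) ∧ (∀ i, θ < f (w i)) ∧ ∀ i j, G.Adj (u j) (w i) ↔ j = i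

namespace IsCutMatching

variable {f : V → ℕ} {θ : ℕ}

theorem cons {n : ℕ} {u w : Fin n → V} {x y : V} (hM : G.IsCutMatching f θ u w)
    (hxy : G.Adj x y) (hx : f x ≤ θ) (hy : θ < f y) (hxw : ∀ i, ¬G.Adj x (w i))
    (huy : ∀ i, ¬G.Adj (u i) y) : G.IsCutMatching f θ (Fin.cons x u) (Fin.cons y w) := by
  obtain ⟨hu, hw, hadj⟩ := hM
  refine ⟨Fin.cases hx hu, Fin.cases hy hw, fun i j => ?_⟩
  cases i using Fin.cases <;> cases j using Fin.cases <;>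
    simp [hxy, hxw, huy, hadj, (Fin.succ_ne_zero _).symm]

theorem injective_comp_of_thin {k : ℕ} {c : V → Fin k} {u w : ι → V} (hf : f.Injective)
    (hthin : ∀ a b d, f a < f b → f b < f d → c a = c b → G.Adj a d → G.Adj b d)
    (hM : G.IsCutMatching f θ u w) : (c ∘ u).Injective := by
  obtain ⟨hu, hw, hadj⟩ := hM
  have hsame : ∀ {i j}, f (u i) < f (u j) → c (u i) = c (u j) → j = i := fun hlt hc =>
    (hadj _ _).1 (hthin _ _ _ hlt ((hu _).trans_lt (hw _)) hc ((hadj _ _).2 rfl))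
  intro i j hc
  by_contra hij
  have hne : u i ≠ u j := fun h => hij ((hadj j i).1 (h ▸ (hadj j j).2 rfl))
  rcases (hf.ne hne).lt_or_gt with hlt | hlt
  · exact hij (hsame hlt hc).symm
  · exact hij (hsame hlt hc.symm)

end IsCutMatching

theorem isCutMatching_const [Subsingleton ι] {f : V → ℕ} {θ : ℕ} {x y : V} (hxy : G.Adj x y)
    (hx : f x ≤ θ) (hy : θ < f y) : G.IsCutMatching f θ (fun _ : ι => x) fun _ => y :=
  ⟨fun _ => hx, fun _ => hy, fun _ _ => iff_of_true hxy (Subsingleton.elim _ _)⟩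

end SimpleGraph

theorem IsKThin.card_le_of_forall_isCutMatching {V ι : Type*} [Fintype ι] {G : SimpleGraph V}
    {k : ℕ} (hG : IsKThin G k)
    (hM : ∀ f : V → ℕ, f.Injective → ∃ θ, ∃ u w : ι → V, G.IsCutMatching f θ u w) :
    Fintype.card ι ≤ k := by
  obtain ⟨c, f, hf, hthin⟩ := hG
  obtain ⟨θ, u, w, hM⟩ := hM f hf
  simpa using Fintype.card_le_of_injective _ (hM.injective_comp_of_thin hf hthin)

namespace completeMaryTree

variable {m h : ℕ}

theorem adj_iff {x y : {l : List (Fin m) // l.length ≤ h}} :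
    (completeMaryTree m h).Adj x y ↔ (∃ a, y.val = a :: x.val) ∨ ∃ a, x.val = a :: y.val := by
  simp only [completeMaryTree, SimpleGraph.fromRel_adj, ne_eq, and_iff_right_iff_imp]
  rintro (⟨a, ha⟩ | ⟨a, ha⟩) rfl <;> simp at ha

theorem suffix_of_adj {c : Fin m} {g : List (Fin m)} {z v : {l : List (Fin m) // l.length ≤ h}}
    (hz : c :: g <:+ z.val) (hzv : (completeMaryTree m h).Adj z v) : g <:+ v.val := by
  rcases adj_iff.1 hzv with ⟨a, ha⟩ | ⟨a, ha⟩
  · rw [ha]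
    exact (suffix_cons c g).trans (hz.trans (suffix_cons a _))
  · rw [ha, suffix_cons_iff] at hz
    rcases hz with hz | hz
    · rw [(cons.inj hz).2]
    · exact (suffix_cons c g).trans hz

theorem not_adj_of_suffix_ne {c : Fin m} {g g' p : List (Fin m)}
    {v z : {l : List (Fin m) // l.length ≤ h}} (hlen : g.length = g'.length) (hne : g ≠ g')
    (hg : g <:+ p) (hv : v.val <:+ p) (hz : c :: g' <:+ z.val) :
    ¬(completeMaryTree m h).Adj v z := fun hvz =>
  hne (suffix_of_suffix_length_le hg ((suffix_of_adj hz hvz.symm).trans hv) hlen.le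
    |>.eq_of_length hlen)

theorem exists_adj_mem_not_mem_between (S : Set {l : List (Fin m) // l.length ≤ h})
    {d p : {l : List (Fin m) // l.length ≤ h}} (hdp : d.val <:+ p.val) (hS : ¬(d ∈ S ↔ p ∈ S)) :
    ∃ x y, (completeMaryTree m h).Adj x y ∧ x ∈ S ∧ y ∉ S ∧
      (d.val <:+ x.val ∧ x.val <:+ p.val) ∧ (d.val <:+ y.val ∧ y.val <:+ p.val) := by
  obtain ⟨s, hs⟩ := hdp
  induction s generalizing p with
  | nil => exact absurd (Subtype.ext hs ▸ Iff.rfl) hS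
  | cons a s ih =>
    have hlen : (s ++ d.val).length ≤ h := by
      have := p.2
      rw [← hs] at this
      simp only [cons_append, length_cons] at this
      omega
    set p' : {l : List (Fin m) // l.length ≤ h} := ⟨s ++ d.val, hlen⟩
    have hp'p : p'.val <:+ p.val := hs ▸ suffix_cons a _
    have hadj : (completeMaryTree m h).Adj p' p := adj_iff.2 (.inl ⟨a, hs.symm⟩)
    have hdp' : d.val <:+ p'.val := suffix_append s d.val
    by_cases hS' : d ∈ S ↔ p' ∈ S
    · by_cases hp : p ∈ S
      · exact ⟨p, p', hadj.symm, hp, fun h => hS (hS'.trans (iff_of_true h hp)),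
          ⟨hdp'.trans hp'p, suffix_refl _⟩, hdp', hp'p⟩
      · exact ⟨p', p, hadj, hS'.1 (by tauto), hp, ⟨hdp', hp'p⟩, hdp'.trans hp'p, suffix_refl _⟩
    · obtain ⟨x, y, hxy, hx, hy, ⟨hdx, hxp⟩, hdy, hyp⟩ := ih hS' rfl
      exact ⟨x, y, hxy, hx, hy, ⟨hdx, hxp.trans hp'p⟩, hdy, hyp.trans hp'p⟩

variable {f : {l : List (Fin m) // l.length ≤ h} → ℕ} {θ n : ℕ} {r : List (Fin m)}

theorem exists_adj_crossing_on_paths (hr : r.length ≤ h)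
    {p q : {l : List (Fin m) // l.length ≤ h}} (hrp : r <:+ p.val) (hrq : r <:+ q.val)
    (hp : f p ≤ θ) (hq : θ < f q) :
    ∃ x y, (completeMaryTree m h).Adj x y ∧ f x ≤ θ ∧ θ < f y ∧
      (r <:+ x.val ∧ (x.val <:+ p.val ∨ x.val <:+ q.val)) ∧
      (r <:+ y.val ∧ (y.val <:+ p.val ∨ y.val <:+ q.val)) := by
  by_cases hr' : f ⟨r, hr⟩ ≤ θ
  · obtain ⟨x, y, hxy, hx, hy, ⟨hrx, hxq⟩, hry, hyq⟩ :=
      exists_adj_mem_not_mem_between {v | f v ≤ θ} (d := ⟨r, hr⟩) hrq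
        (by simp only [Set.mem_ofPred_eq]; omega)
    exact ⟨x, y, hxy, hx, not_le.1 hy, ⟨hrx, .inr hxq⟩, hry, .inr hyq⟩
  · obtain ⟨x, y, hxy, hx, hy, ⟨hrx, hxp⟩, hry, hyp⟩ :=
      exists_adj_mem_not_mem_between {v | f v ≤ θ} (d := ⟨r, hr⟩) hrp
        (by simp only [Set.mem_ofPred_eq]; omega)
    exact ⟨x, y, hxy, hx, not_le.1 hy, ⟨hrx, .inl hxp⟩, hry, .inl hyp⟩

/-- The subtree rooted at `r` consists of the vertices having `r` as a suffix. -/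
def HasCutMatchingInSubtree (f : {l : List (Fin m) // l.length ≤ h} → ℕ) (θ : ℕ)
    (r : List (Fin m)) (n : ℕ) : Prop :=
  ∃ u w : Fin n → {l : List (Fin m) // l.length ≤ h},
    (∀ i, r <:+ (u i).val ∧ r <:+ (w i).val) ∧ (completeMaryTree m h).IsCutMatching f θ u w

theorem HasCutMatchingInSubtree.extend {c : Fin m} {g₁ g₂ g₃ : List (Fin m)}
    (H : HasCutMatchingInSubtree f θ (c :: g₂) n) (hr : r.length ≤ h) (hrg : r <:+ g₂)
    (hlen₁ : g₁.length = g₂.length) (hlen₃ : g₃.length = g₂.length)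
    (hne₁ : g₁ ≠ g₂) (hne₃ : g₃ ≠ g₂) {p q : {l : List (Fin m) // l.length ≤ h}}
    (hgp : g₁ <:+ p.val) (hgq : g₃ <:+ q.val) (hrp : r <:+ p.val) (hrq : r <:+ q.val)
    (hp : f p ≤ θ) (hq : θ < f q) :
    HasCutMatchingInSubtree f θ r (n + 1) := by
  obtain ⟨u, w, hmem, hM⟩ := H
  obtain ⟨x, y, hxy, hx, hy, ⟨hrx, hxpq⟩, hry, hypq⟩ :=
    exists_adj_crossing_on_paths hr hrp hrq hp hq
  have hfar : ∀ {v z : {l : List (Fin m) // l.length ≤ h}},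
      (v.val <:+ p.val ∨ v.val <:+ q.val) → c :: g₂ <:+ z.val →
        ¬(completeMaryTree m h).Adj v z := by
    rintro v z (hv | hv) hz
    exacts [not_adj_of_suffix_ne hlen₁ hne₁ hgp hv hz, not_adj_of_suffix_ne hlen₃ hne₃ hgq hv hz]
  have hrc : r <:+ c :: g₂ := hrg.trans (suffix_cons c g₂)
  refine ⟨Fin.cons x u, Fin.cons y w, Fin.cases ⟨hrx, hry⟩ fun i => ?_, hM.cons hxy hx hy
    (fun i => hfar hxpq (hmem i).2) fun i hy => hfar hypq (hmem i).1 hy.symm⟩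
  exact ⟨hrc.trans (hmem i).1, hrc.trans (hmem i).2⟩

theorem HasCutMatchingInSubtree.exists_le (H : HasCutMatchingInSubtree f θ r (n + 1)) :
    ∃ p, r <:+ p.val ∧ f p ≤ θ :=
  let ⟨u, _, hmem, hu, _⟩ := H
  ⟨u 0, (hmem 0).1, hu 0⟩

theorem HasCutMatchingInSubtree.exists_lt (H : HasCutMatchingInSubtree f θ r (n + 1)) :
    ∃ q, r <:+ q.val ∧ θ < f q :=
  let ⟨_, w, hmem, _, hw, _⟩ := H
  ⟨w 0, (hmem 0).2, hw 0⟩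

theorem exists_hasCutMatchingInSubtree_of_three {c : Fin m} {g : Fin 3 → List (Fin m)}
    (hg : g.Injective) (hr : r.length ≤ h) (hrg : ∀ i, r <:+ g i)
    (hlen : ∀ i j, (g i).length = (g j).length) {θ : Fin 3 → ℕ}
    (H : ∀ i, HasCutMatchingInSubtree f (θ i) (c :: g i) (n + 1)) :
    ∃ θ, HasCutMatchingInSubtree f θ r (n + 2) := by
  set σ := Tuple.sort θ
  have hmono : Monotone (θ ∘ σ) := Tuple.monotone_sort θ
  have hne : ∀ i j : Fin 3, i ≠ j → g (σ i) ≠ g (σ j) := fun i j hij =>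
    hg.ne (σ.injective.ne hij)
  have hsuffix : ∀ i, g i <:+ c :: g i := fun i => suffix_cons c _
  obtain ⟨p, hp, hfp⟩ := (H (σ 0)).exists_le
  obtain ⟨q, hq, hfq⟩ := (H (σ 2)).exists_lt
  exact ⟨θ (σ 1), (H (σ 1)).extend hr (hrg _) (hlen _ _) (hlen _ _) (hne 0 1 (by decide))
    (hne 2 1 (by decide)) ((hsuffix _).trans hp) ((hsuffix _).trans hq)
    ((hrg _).trans ((hsuffix _).trans hp)) ((hrg _).trans ((hsuffix _).trans hq))
    (hfp.trans (hmono (by decide))) ((hmono (by decide)).trans_lt hfq)⟩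

theorem exists_hasCutMatchingInSubtree (hm : 1 < m) (hf : f.Injective) :
    ∀ (n : ℕ) (r : List (Fin m)), r.length + 3 * n + 1 ≤ h →
      ∃ θ, HasCutMatchingInSubtree f θ r (n + 1)
  | 0, r, hr => by
    obtain ⟨a⟩ : Nonempty (Fin m) := ⟨⟨0, by omega⟩⟩
    have hadj : (completeMaryTree m h).Adj ⟨r, by omega⟩ ⟨a :: r, by rw [length_cons]; omega⟩ :=
      adj_iff.2 (.inl ⟨a, rfl⟩)
    rcases (hf.ne hadj.ne).lt_or_gt with hlt | hlt
    · exact ⟨_, fun _ => _, fun _ => _, fun _ => ⟨suffix_refl r, suffix_cons a r⟩,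
        SimpleGraph.isCutMatching_const (ι := Fin 1) hadj le_rfl hlt⟩
    · exact ⟨_, fun _ => _, fun _ => _, fun _ => ⟨suffix_cons a r, suffix_refl r⟩,
        SimpleGraph.isCutMatching_const (ι := Fin 1) hadj.symm le_rfl hlt⟩
  | n + 1, r, hr => by
    obtain ⟨a, b, hab⟩ := (Fin.nontrivial_iff_two_le.2 hm).exists_pair_ne
    let g : Fin 3 → List (Fin m) := ![a :: a :: r, b :: a :: r, a :: b :: r]
    have hglen : ∀ i, (g i).length = r.length + 2 := by
      intro i
      fin_cases i <;> rfl
    choose θ H using fun i => exists_hasCutMatchingInSubtree hm hf n (a :: g i)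
      (by rw [length_cons, hglen]; omega)
    refine exists_hasCutMatchingInSubtree_of_three (g := g) ?_ (by omega) ?_
      (fun i j => by rw [hglen, hglen]) H
    · intro i j
      fin_cases i <;> fin_cases j <;> simp [g, hab, hab.symm]
    · intro i
      fin_cases i <;> exact (suffix_cons _ _).trans (suffix_cons _ _)

end completeMaryTree

/-- The thinness of the complete `m`-ary tree of height `h` is at least `c·h` for some
constant `c > 0` depending only on `m`; in particular it is unbounded as `h → ∞`. -/
theorem completeMaryTree_thinness_linear (m : ℕ) (hm : 1 < m) :
    ∃ c : ℝ, 0 < c ∧ ∀ h k : ℕ, IsKThin (completeMaryTree m h) k → c * h ≤ k := by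
  refine ⟨1 / 3, by norm_num, fun h k hG => ?_⟩
  rcases Nat.eq_zero_or_pos h with rfl | hh
  · simp
  have hcard := hG.card_le_of_forall_isCutMatching (ι := Fin ((h - 1) / 3 + 1)) fun f hf => by
    obtain ⟨θ, u, w, -, hM⟩ := completeMaryTree.exists_hasCutMatchingInSubtree hm hf
      ((h - 1) / 3) [] (by rw [length_nil]; omega)
    exact ⟨θ, u, w, hM⟩
  rw [Fintype.card_fin] at hcard
  have : (h : ℝ) ≤ 3 * k := by exact_mod_cast (by omega : h ≤ 3 * k)
  linarith
end

section
/- The (r × r)-grid graph has thinness at least c·r for some absolute constant c > 0. -/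
/-!
Order the vertices as in a thin representation and let `S` consist of the first `⌊r²/2⌋` of
them. Within one part, the first vertex of `S` having a neighbour `w` outside `S` forces, by
thinness, every later such vertex of that part to be adjacent to `w`; as the grid has maximum
degree 4, each part contains at most 4 vertices of the inner boundary of `S`, which thus has at
most `4k` vertices. On the other hand, in the grid either at least `r/2` rows meet both `S` and
its complement, or some row lies inside `S` and another outside it, and then every column
crosses the boundary; in both cases the inner boundary has at least `r/2` vertices.
-/

open Finset SimpleGraph Fintype Function

namespace SimpleGraph

variable {V : Type*} [Fintype V] [DecidableEq V]

def innerBoundary (G : SimpleGraph V) [DecidableRel G.Adj] (S : Finset V) : Finset V :=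
  {v ∈ S | ∃ w ∉ S, G.Adj v w}

variable {G : SimpleGraph V} [DecidableRel G.Adj]

lemma exists_map_mem_innerBoundary {W : Type*} {H : SimpleGraph W} (φ : H →g G)
    (hH : H.Preconnected) {S : Finset V} {a b : W} (ha : φ a ∈ S) (hb : φ b ∉ S) :
    ∃ x, φ x ∈ G.innerBoundary S := by
  obtain ⟨p⟩ := hH a b
  obtain ⟨d, -, hd, hd'⟩ := p.exists_boundary_dart (φ ⁻¹' S) ha hb
  exact ⟨d.fst, mem_filter.2 ⟨hd, φ d.snd, hd', φ.map_adj d.adj⟩⟩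

lemma pathGraph_degree_le_two {n : ℕ} (v : Fin n) [Fintype ((pathGraph n).neighborSet v)] :
    (pathGraph n).degree v ≤ 2 := by
  rw [← card_neighborFinset_eq_degree]
  refine card_le_card_of_injOn (fun u => decide (u < v)) (fun _ _ => mem_univ _) ?_ |>.trans_eq rfl
  intro u hu u' hu' h
  simp only [coe_neighborFinset, mem_neighborSet, pathGraph_adj, decide_eq_decide,
    Fin.lt_def] at hu hu' h
  ext
  omega

lemma pathGraph_boxProd_degree_le_four {m n : ℕ} [DecidableRel (pathGraph m □ pathGraph n).Adj]
    (v : Fin m × Fin n) :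
    (pathGraph m □ pathGraph n).degree v ≤ 4 := by
  classical
  rw [degree_boxProd]
  have := pathGraph_degree_le_two v.1
  have := pathGraph_degree_le_two v.2
  omega

end SimpleGraph

lemma gridGraph_eq_boxProd (m n : ℕ) : gridGraph m n = pathGraph m □ pathGraph n := by
  ext p q
  simp only [gridGraph, fromRel_adj, boxProd_adj, pathGraph_adj, ne_eq, Prod.ext_iff, Fin.ext_iff]
  omega

section BoxProd

variable {α β : Type*} [Fintype α] [Fintype β] [DecidableEq α] [DecidableEq β]
  {G : SimpleGraph α} {H : SimpleGraph β} [DecidableRel (G □ H).Adj]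

theorem min_card_le_mul_card_innerBoundary_boxProd (hG : G.Preconnected) (hH : H.Preconnected)
    (S : Finset (α × β)) :
    min #S #Sᶜ ≤ max (card α) (card β) * #((G □ H).innerBoundary S) := by
  set B := (G □ H).innerBoundary S
  have row_crossing {a b b'} (hb : (a, b) ∈ S) (hb' : (a, b') ∉ S) :
      a ∈ B.image Prod.fst := by
    obtain ⟨x, hx⟩ := exists_map_mem_innerBoundary (boxProdRight G H a).toHom hH hb hb'
    exact mem_image.2 ⟨_, hx, rfl⟩
  have col_crossing {a a' b} (ha : (a, b) ∈ S) (ha' : (a', b) ∉ S) :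
      b ∈ B.image Prod.snd := by
    obtain ⟨x, hx⟩ := exists_map_mem_innerBoundary (boxProdLeft G H b).toHom hG ha ha'
    exact mem_image.2 ⟨_, hx, rfl⟩
  have card_le_of_rows {T : Finset (α × β)} (hT : ∀ p ∈ T, p.1 ∈ B.image Prod.fst) :
      #T ≤ max (card α) (card β) * #B :=
    calc #T ≤ #(B.image Prod.fst ×ˢ (univ : Finset β)) :=
          card_le_card fun p hp => mem_product.2 ⟨hT p hp, mem_univ _⟩
      _ = #(B.image Prod.fst) * card β := by rw [card_product, card_univ]
      _ ≤ #B * max (card α) (card β) := Nat.mul_le_mul card_image_le (le_max_right _ _)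
      _ = _ := mul_comm _ _
  by_cases hfull : ∃ a, ∀ b, (a, b) ∈ S
  · by_cases hempty : ∃ a, ∀ b, (a, b) ∉ S
    · obtain ⟨a, ha⟩ := hfull
      obtain ⟨a', ha'⟩ := hempty
      have hcols : card β ≤ #B :=
        calc card β = #(univ : Finset β) := card_univ.symm
          _ ≤ #(B.image Prod.snd) := card_le_card fun b _ => col_crossing (ha b) (ha' b)
          _ ≤ #B := card_image_le
      calc min #S #Sᶜ ≤ #S := min_le_left _ _
        _ ≤ card (α × β) := card_le_univ S
        _ = card α * card β := card_prod _ _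
        _ ≤ max (card α) (card β) * #B := Nat.mul_le_mul (le_max_left _ _) hcols
    · push Not at hempty
      refine (min_le_right _ _).trans (card_le_of_rows fun p hp => ?_)
      obtain ⟨b, hb⟩ := hempty p.1
      exact row_crossing hb (mem_compl.1 hp)
  · push Not at hfull
    refine (min_le_left _ _).trans (card_le_of_rows fun p hp => ?_)
    obtain ⟨b, hb⟩ := hfull p.1
    exact row_crossing hp hb

end BoxProd

section Thin

variable {V : Type*} [Fintype V] [DecidableEq V] {G : SimpleGraph V} [DecidableRel G.Adj]

lemma exists_card_filter_lt_eq {f : V → ℕ} (hf : Injective f) {n : ℕ} (hn : n ≤ card V) :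
    ∃ t, #{v | f v < t} = n := by
  have hex : ∃ t, n ≤ #{v | f v < t} :=
    ⟨univ.sup f + 1, by
      rwa [filter_true_of_mem fun v _ => Nat.lt_succ_of_le (le_sup (mem_univ v)), card_univ]⟩
  refine ⟨Nat.find hex, le_antisymm ?_ (Nat.find_spec hex)⟩
  cases h : Nat.find hex with
  | zero => simp
  | succ s =>
    have hs : #{v | f v < s} < n := by
      have := Nat.find_min hex (show s < Nat.find hex by omega)
      omega
    calc #{v | f v < s + 1} ≤ #(univ.filter (f · < s) ∪ univ.filter (f · = s)) :=
          card_le_card fun v hv => by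
            simp only [mem_filter, mem_union, mem_univ, true_and] at hv ⊢
            omega
      _ ≤ #{v | f v < s} + #{v | f v = s} := card_union_le _ _
      _ ≤ #{v | f v < s} + 1 :=
          Nat.add_le_add_left (card_le_one.2 fun a ha b hb => hf (by simp_all)) _
      _ ≤ n := hs

lemma card_innerBoundary_filter_lt_le {k Δ : ℕ} (c : V → Fin k) {f : V → ℕ}
    (hf : Injective f)
    (hthin : ∀ u v w, f u < f v → f v < f w → c u = c v → G.Adj u w → G.Adj v w)
    (hΔ : ∀ v, G.degree v ≤ Δ) (t : ℕ) :
    #(G.innerBoundary {v | f v < t}) ≤ Δ * k := by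
  set B := G.innerBoundary {v | f v < t}
  have fiber_le (i : Fin k) : #{v ∈ B | c v = i} ≤ Δ := by
    obtain hF | hF := {v ∈ B | c v = i}.eq_empty_or_nonempty
    · simp [hF]
    obtain ⟨u, hu, hmin⟩ := exists_min_image _ f hF
    obtain ⟨huB, hcu⟩ := mem_filter.1 hu
    obtain ⟨-, w, hw, huw⟩ := mem_filter.1 huB
    calc #{v ∈ B | c v = i} ≤ #(G.neighborFinset w) := card_le_card fun v hv => ?_
      _ = G.degree w := card_neighborFinset_eq_degree G w
      _ ≤ Δ := hΔ w
    obtain ⟨hvB, hcv⟩ := mem_filter.1 hv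
    have hvw : f v < f w := by
      have := (mem_filter.1 hvB).1
      simp only [mem_filter, mem_univ, true_and, not_lt] at this hw
      omega
    rw [mem_neighborFinset, adj_comm]
    obtain rfl | hne := eq_or_ne u v
    · exact huw
    exact hthin u v w ((hmin v hv).lt_of_ne (hf.ne hne)) hvw (hcu.trans hcv.symm) huw
  calc #B = ∑ i, #{v ∈ B | c v = i} := card_eq_sum_card_fiberwise fun _ _ => mem_univ _
    _ ≤ ∑ _i : Fin k, Δ := sum_le_sum fun i _ => fiber_le i
    _ = Δ * k := by simp [mul_comm]

theorem IsKThin.exists_card_innerBoundary_le {k Δ n : ℕ} (h : IsKThin G k)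
    (hΔ : ∀ v, G.degree v ≤ Δ) (hn : n ≤ card V) :
    ∃ S : Finset V, #S = n ∧ #(G.innerBoundary S) ≤ Δ * k := by
  obtain ⟨c, f, hf, hthin⟩ := h
  obtain ⟨t, ht⟩ := exists_card_filter_lt_eq hf hn
  exact ⟨_, ht, card_innerBoundary_filter_lt_le c hf hthin hΔ t⟩

end Thin

lemma IsKThin.pos {V : Type*} [Nonempty V] {G : SimpleGraph V} {k : ℕ} (h : IsKThin G k) :
    0 < k := by
  obtain ⟨c, -⟩ := h
  exact Fin.pos (c (Classical.arbitrary V))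

theorem le_eight_mul_add_one_of_isKThin_gridGraph {r k : ℕ} (h : IsKThin (gridGraph r r) k) :
    r ≤ 8 * k + 1 := by
  classical
  rw [gridGraph_eq_boxProd] at h
  obtain ⟨S, hS, hB⟩ := h.exists_card_innerBoundary_le
    pathGraph_boxProd_degree_le_four (n := r * r / 2) (by simpa using Nat.div_le_self _ 2)
  have hiso := min_card_le_mul_card_innerBoundary_boxProd (pathGraph_preconnected r)
    (pathGraph_preconnected r) S
  rw [card_compl, hS, card_prod, Fintype.card_fin, max_self] at hiso
  have hsq : r * r / 2 ≤ r * (4 * k) := by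
    calc r * r / 2 = min (r * r / 2) (r * r - r * r / 2) := (min_eq_left (by omega)).symm
      _ ≤ r * #((pathGraph r □ pathGraph r).innerBoundary S) := hiso
      _ ≤ r * (4 * k) := Nat.mul_le_mul_left r hB
  by_contra! hr
  have := Nat.mul_le_mul_left r (show 8 * k + 2 ≤ r by omega)
  ring_nf at this hsq
  omega

/-- The `(r × r)`-grid has thinness at least `c·r` for some absolute constant `c > 0`. -/
theorem gridGraph_thinness_linear :
    ∃ c : ℝ, 0 < c ∧ ∀ r k : ℕ, IsKThin (gridGraph r r) k → c * r ≤ k := by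
  refine ⟨1 / 9, by norm_num, fun r k h => ?_⟩
  obtain rfl | hr := Nat.eq_zero_or_pos r
  · simp
  have : Nonempty (Fin r × Fin r) := ⟨(⟨0, hr⟩, ⟨0, hr⟩)⟩
  have hk := h.pos
  have hrk : (r : ℝ) ≤ 9 * k := by
    have := le_eight_mul_add_one_of_isKThin_gridGraph h
    exact_mod_cast (show r ≤ 9 * k by omega)
  linarith
end

section
/- For every d ≥ 1, the d-dimensional full grid (the strong product of d paths, i.e., the graph on {1,…,m}^d with edges between points at L∞-distance 1) is inversion-free proper 3^{d−1}-mixed-thin. -/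
/-- The edge relation `E_{i,j}`: either `E(G)` or its complement (on distinct vertices),
according to the choice `compl i j`. -/
def mixedEdge {V : Type*} {k : ℕ} (G : SimpleGraph V) (compl : Fin k → Fin k → Prop)
    (i j : Fin k) (u v : V) : Prop :=
  (compl i j ∧ u ≠ v ∧ ¬ G.Adj u v) ∨ (¬ compl i j ∧ G.Adj u v)

/-- `c`, `le`, `compl` witness that `G` is an inversion-free proper `k`-mixed-thin graph:
`c` is the partition into `k` parts, each `le i j` (for `i ≤ j`) is a linear order on
`V_i ∪ V_j` whose restrictions to `V_i` and `V_j` are `le i i` and `le j j`, and the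
edge choices `E_{i,j}` (encoded by `compl`) satisfy conditions (b) and (c) of Definition 1. -/
def MixedThinWitness {V : Type*} {k : ℕ} (G : SimpleGraph V) (c : V → Fin k)
    (le : Fin k → Fin k → V → V → Prop) (compl : Fin k → Fin k → Prop) : Prop :=
  ∀ i j : Fin k, i ≤ j →
    -- `le i j` is a linear order on `V_i ∪ V_j`
    (∀ u, (c u = i ∨ c u = j) → le i j u u) ∧
    (∀ u v, (c u = i ∨ c u = j) → (c v = i ∨ c v = j) →
      le i j u v → le i j v u → u = v) ∧
    (∀ u v w, (c u = i ∨ c u = j) → (c v = i ∨ c v = j) → (c w = i ∨ c w = j) →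
      le i j u v → le i j v w → le i j u w) ∧
    (∀ u v, (c u = i ∨ c u = j) → (c v = i ∨ c v = j) → le i j u v ∨ le i j v u) ∧
    -- inversion-free: restriction of `le i j` to each part equals the part's own order
    (∀ u v, c u = i → c v = i → (le i j u v ↔ le i i u v)) ∧
    (∀ u v, c u = j → c v = j → (le i j u v ↔ le j j u v)) ∧
    -- condition (b)
    (∀ u v w, ((c u = i ∧ c v = i ∧ c w = j) ∨ (c u = j ∧ c v = j ∧ c w = i)) →
      le i j u v → u ≠ v → le i j v w → v ≠ w →
      mixedEdge G compl i j u w → mixedEdge G compl i j v w) ∧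
    -- condition (c)
    (∀ u v w, ((c v = i ∧ c w = i ∧ c u = j) ∨ (c v = j ∧ c w = j ∧ c u = i)) →
      le i j u v → u ≠ v → le i j v w → v ≠ w →
      mixedEdge G compl i j u w → mixedEdge G compl i j u v)

/-- `G` is an inversion-free proper `k`-mixed-thin graph. -/
def InvFreeProperMixedThin {V : Type*} (G : SimpleGraph V) (k : ℕ) : Prop :=
  ∃ (c : V → Fin k) (le : Fin k → Fin k → V → V → Prop) (compl : Fin k → Fin k → Prop),
    MixedThinWitness G c le compl

/-- The `d`-dimensional full grid: the strong product of `d` paths on `m` vertices,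
i.e. the graph on `{1,…,m}^d` with edges between distinct points at `L∞`-distance 1. -/
def fullGrid (d m : ℕ) : SimpleGraph (Fin d → Fin m) :=
  SimpleGraph.fromRel (fun x y => ∀ i, (x i : ℕ) ≤ (y i : ℕ) + 1 ∧ (y i : ℕ) ≤ (x i : ℕ) + 1)

/-!
Colour a point of `[m]^d` by the residues mod 3 of its coordinates `2, …, d`, and fix two
colours. In each of these coordinates, the integers having one of the two residues fall into
consecutive blocks of at most two elements, and adjacent points of the two classes lie in the
same block in every such coordinate. Order `V_i ∪ V_j` lexicographically by (block vector, first
coordinate, colour). If `u < v < w` and `uw` is an edge, then `u, v, w` share their block vector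
and their first coordinates increase weakly, so `uv` and `vw` are edges as well: this gives (b)
and (c) with `E_{i,j} = E(G)`. Inside one class the block vector is a fixed translate of the
coordinate vector, so the order on a class does not depend on the partner class.
-/
theorem MixedThinWitness.of_key {V α : Type*} [LinearOrder α] {k : ℕ} (G : SimpleGraph V)
    (c : V → Fin k) (key : Fin k → Fin k → V → α)
    (injOn : ∀ i j, i ≤ j → Set.InjOn (key i j) {u | c u = i ∨ c u = j})
    (le_iff : ∀ i j u v, c u = c v →
      (key i j u ≤ key i j v ↔ key (c u) (c u) u ≤ key (c u) (c u) v))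
    (umbrella : ∀ i j, i ≤ j → ∀ u v w, (c u = i ∨ c u = j) → (c v = i ∨ c v = j) →
      (c w = i ∨ c w = j) → key i j u < key i j v → key i j v < key i j w →
      G.Adj u w → G.Adj u v ∧ G.Adj v w) :
    MixedThinWitness G c (fun i j u v => key i j u ≤ key i j v) (fun _ _ => False) := by
  intro i j hij
  have lt_of_le {u v} (hu : c u = i ∨ c u = j) (hv : c v = i ∨ c v = j)
      (hle : key i j u ≤ key i j v) (hne : u ≠ v) : key i j u < key i j v :=
    hle.lt_of_ne ((injOn i j hij).ne hu hv hne)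
  have mixedEdge_iff (u v : V) : mixedEdge G (fun _ _ => False) i j u v ↔ G.Adj u v := by
    simp [mixedEdge]
  refine ⟨fun u _ => le_rfl, fun u v hu hv h₁ h₂ => injOn i j hij hu hv (le_antisymm h₁ h₂),
    fun u v w _ _ _ => le_trans, fun u v _ _ => le_total _ _,
    fun u v hu hv => ?_, fun u v hu hv => ?_, ?_, ?_⟩
  · simpa only [hu] using le_iff i j u v (hu.trans hv.symm)
  · simpa only [hu] using le_iff i j u v (hu.trans hv.symm)
  · intro u v w hpart huv hne₁ hvw hne₂ huw
    obtain ⟨hu, hv, hw⟩ : (c u = i ∨ c u = j) ∧ (c v = i ∨ c v = j) ∧ (c w = i ∨ c w = j) := by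
      rcases hpart with ⟨hu, hv, hw⟩ | ⟨hu, hv, hw⟩ <;> simp [hu, hv, hw]
    rw [mixedEdge_iff] at huw ⊢
    exact (umbrella i j hij u v w hu hv hw (lt_of_le hu hv huv hne₁)
      (lt_of_le hv hw hvw hne₂) huw).2
  · intro u v w hpart huv hne₁ hvw hne₂ huw
    obtain ⟨hu, hv, hw⟩ : (c u = i ∨ c u = j) ∧ (c v = i ∨ c v = j) ∧ (c w = i ∨ c w = j) := by
      rcases hpart with ⟨hv, hw, hu⟩ | ⟨hv, hw, hu⟩ <;> simp [hu, hv, hw]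
    rw [mixedEdge_iff] at huw ⊢
    exact (umbrella i j hij u v w hu hv hw (lt_of_le hu hv huv hne₁)
      (lt_of_le hv hw hvw hne₂) huw).1

theorem fullGrid_adj_iff {d m : ℕ} {x y : Fin d → Fin m} :
    (fullGrid d m).Adj x y ↔ x ≠ y ∧ ∀ s, (x s : ℕ) ≤ y s + 1 ∧ (y s : ℕ) ≤ x s + 1 := by
  rw [fullGrid, SimpleGraph.fromRel_adj]
  exact and_congr_right fun _ => or_iff_left_of_imp fun h s => (h s).symm

namespace FullGrid

/-- `blockIndex p q` is constant on each block `{a, a + 1}` with `{a % 3, (a + 1) % 3} = {p, q}`: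
the upper element of such a block is the one whose residue is one more than `p` or `q`. -/
def blockShift (p q r : ℕ) : ℤ := if r = (p + 1) % 3 ∨ r = (q + 1) % 3 then 1 else 0

def blockIndex (p q a : ℕ) : ℤ := a - blockShift p q (a % 3)

theorem blockIndex_eq_of_le_succ {p q a b : ℕ} (ha : a % 3 = p ∨ a % 3 = q)
    (hb : b % 3 = p ∨ b % 3 = q) (hab : a ≤ b + 1) (hba : b ≤ a + 1) :
    blockIndex p q a = blockIndex p q b := by
  unfold blockIndex blockShift
  split_ifs <;> omega

theorem le_succ_of_blockIndex_eq {p q a b : ℕ} (h : blockIndex p q a = blockIndex p q b) :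
    a ≤ b + 1 ∧ b ≤ a + 1 := by
  unfold blockIndex blockShift at h
  split_ifs at h <;> omega

variable {n m : ℕ}

def tailResidues (x : Fin (n + 1) → Fin m) : Fin n → Fin 3 :=
  fun t => ⟨x t.succ % 3, Nat.mod_lt _ three_pos⟩

def gridClass (x : Fin (n + 1) → Fin m) : Fin (3 ^ n) := finFunctionFinEquiv (tailResidues x)

def gridBlock (ρ σ : Fin n → Fin 3) (x : Fin (n + 1) → Fin m) : Fin n → ℤ :=
  fun t => blockIndex (ρ t) (σ t) (x t.succ)

noncomputable def gridKey (ρ σ : Fin n → Fin 3) (x : Fin (n + 1) → Fin m) :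
    Lex (Lex (Fin n → ℤ) × Lex (Fin m × Fin (3 ^ n))) :=
  toLex (toLex (gridBlock ρ σ x), toLex (x 0, gridClass x))

theorem gridBlock_eq_of_adj {ρ σ : Fin n → Fin 3} {x y : Fin (n + 1) → Fin m}
    (hx : tailResidues x = ρ ∨ tailResidues x = σ) (hy : tailResidues y = ρ ∨ tailResidues y = σ)
    (hxy : (fullGrid (n + 1) m).Adj x y) : gridBlock ρ σ x = gridBlock ρ σ y := by
  have residue {z : Fin (n + 1) → Fin m} (hz : tailResidues z = ρ ∨ tailResidues z = σ)
      (t : Fin n) : (z t.succ : ℕ) % 3 = ρ t ∨ (z t.succ : ℕ) % 3 = σ t := by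
    rcases hz with rfl | rfl
    exacts [Or.inl rfl, Or.inr rfl]
  funext t
  exact blockIndex_eq_of_le_succ (residue hx t) (residue hy t)
    ((fullGrid_adj_iff.1 hxy).2 t.succ).1 ((fullGrid_adj_iff.1 hxy).2 t.succ).2

theorem fullGrid_adj_of_gridBlock_eq {ρ σ : Fin n → Fin 3} {x y : Fin (n + 1) → Fin m}
    (hne : x ≠ y) (hblock : gridBlock ρ σ x = gridBlock ρ σ y)
    (h₁ : (x 0 : ℕ) ≤ y 0 + 1) (h₂ : (y 0 : ℕ) ≤ x 0 + 1) : (fullGrid (n + 1) m).Adj x y := by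
  refine fullGrid_adj_iff.2 ⟨hne, fun s => ?_⟩
  induction s using Fin.cases with
  | zero => exact ⟨h₁, h₂⟩
  | succ t => exact le_succ_of_blockIndex_eq (congrFun hblock t)

theorem gridKey_injective (ρ σ : Fin n → Fin 3) :
    Function.Injective (gridKey ρ σ : (Fin (n + 1) → Fin m) → _) := by
  intro x y h
  simp only [gridKey, toLex_inj, Prod.mk.injEq] at h
  obtain ⟨hblock, h0, hclass⟩ := h
  have hres : tailResidues x = tailResidues y := finFunctionFinEquiv.injective hclass
  funext s
  induction s using Fin.cases with
  | zero => exact h0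
  | succ t =>
    have hmod := congrArg Fin.val (congrFun hres t)
    have hidx := congrFun hblock t
    simp only [gridBlock, blockIndex, tailResidues] at hmod hidx
    rw [hmod] at hidx
    exact Fin.ext (by omega)

theorem gridKey_le_gridKey_iff {ρ σ : Fin n → Fin 3} {x y : Fin (n + 1) → Fin m}
    (h : tailResidues x = tailResidues y) :
    gridKey ρ σ x ≤ gridKey ρ σ y ↔
      toLex (toLex (fun t : Fin n => (x t.succ : ℤ)), toLex (x 0, gridClass x)) ≤
        toLex (toLex (fun t : Fin n => (y t.succ : ℤ)), toLex (y 0, gridClass y)) := by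
  have hshift (z : Fin (n + 1) → Fin m) : toLex (gridBlock ρ σ z) =
      toLex (fun t : Fin n => (z t.succ : ℤ)) -
        toLex (fun t => blockShift (ρ t) (σ t) (tailResidues z t)) := rfl
  simp only [gridKey, Prod.Lex.toLex_le_toLex', hshift, h, sub_le_sub_iff_right, sub_left_inj]

theorem gridKey_umbrella {ρ σ : Fin n → Fin 3} {u v w : Fin (n + 1) → Fin m}
    (hu : tailResidues u = ρ ∨ tailResidues u = σ) (hw : tailResidues w = ρ ∨ tailResidues w = σ)
    (huv : gridKey ρ σ u < gridKey ρ σ v) (hvw : gridKey ρ σ v < gridKey ρ σ w)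
    (huw : (fullGrid (n + 1) m).Adj u w) :
    (fullGrid (n + 1) m).Adj u v ∧ (fullGrid (n + 1) m).Adj v w := by
  have proj {x y : Fin (n + 1) → Fin m} (h : gridKey ρ σ x ≤ gridKey ρ σ y) :
      toLex (gridBlock ρ σ x) ≤ toLex (gridBlock ρ σ y) ∧
        (gridBlock ρ σ x = gridBlock ρ σ y → x 0 ≤ y 0) := by
    simp only [gridKey, Prod.Lex.toLex_le_toLex', toLex_inj] at h
    exact ⟨h.1, fun hb => (h.2 hb).1⟩
  obtain ⟨huv₁, huv₂⟩ := proj huv.le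
  obtain ⟨hvw₁, hvw₂⟩ := proj hvw.le
  have huw₁ := gridBlock_eq_of_adj hu hw huw
  have hbuv : gridBlock ρ σ u = gridBlock ρ σ v :=
    toLex_inj.1 (le_antisymm huv₁ (huw₁ ▸ hvw₁))
  have hbvw : gridBlock ρ σ v = gridBlock ρ σ w := hbuv.symm.trans huw₁
  have h0uv := huv₂ hbuv
  have h0vw := hvw₂ hbvw
  have h0uw := (fullGrid_adj_iff.1 huw).2 0
  exact ⟨fullGrid_adj_of_gridBlock_eq (ne_of_apply_ne _ huv.ne) hbuv (by omega) (by omega),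
    fullGrid_adj_of_gridBlock_eq (ne_of_apply_ne _ hvw.ne) hbvw (by omega) (by omega)⟩

theorem mixedThinWitness (n m : ℕ) :
    MixedThinWitness (fullGrid (n + 1) m) gridClass
      (fun i j u v => gridKey (finFunctionFinEquiv.symm i) (finFunctionFinEquiv.symm j) u ≤
        gridKey (finFunctionFinEquiv.symm i) (finFunctionFinEquiv.symm j) v)
      (fun _ _ => False) := by
  have mem_iff {x : Fin (n + 1) → Fin m} {i : Fin (3 ^ n)} :
      gridClass x = i ↔ tailResidues x = finFunctionFinEquiv.symm i :=
    (Equiv.eq_symm_apply _).symm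
  refine MixedThinWitness.of_key _ gridClass _ (fun i j _ => (gridKey_injective _ _).injOn)
    (fun i j u v huv => ?_) (fun i j _ u v w hu _ hw => ?_)
  · have hres : tailResidues u = tailResidues v := finFunctionFinEquiv.injective huv
    rw [gridKey_le_gridKey_iff hres, gridKey_le_gridKey_iff hres]
  · simp only [mem_iff] at hu hw
    exact gridKey_umbrella hu hw

end FullGrid

/-- For every `d ≥ 1`, the `d`-dimensional full grid is inversion-free proper
`3^{d−1}`-mixed-thin. -/
theorem fullGrid_invFree_proper_mixed_thin (d m : ℕ) (hd : 1 ≤ d) :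
    InvFreeProperMixedThin (fullGrid d m) (3 ^ (d - 1)) := by
  obtain ⟨n, rfl⟩ := Nat.exists_eq_add_of_le' hd
  rw [Nat.add_sub_cancel]
  exact ⟨_, _, _, FullGrid.mixedThinWitness n m⟩
end

section
/- Let P₀ = (V, ⪯₀) be a poset that is a disjoint union of k chains V₁,…,V_k. Let X ⊇ V and suppose each x ∈ X \ V is assigned a 'connector': a pair (l_x, u_x) with l_x ∈ V_i and u_x ∈ V_j for some i ≤ j (and l_x strictly below u_x in the chain when i = j). Define ⊑ as the union over x of the relations {(l_x, x), (x, u_x)}, together with the relations x ⊑_{ij} y for distinct connector centres x, y with joins to the same pair (V_i, V_j), whenever l_x < l_y in V_i and u_x < u_y in V_j. Then the reflexive–transitive closure ⪯₁ of ⪯₀ ∪ ⊑ is a partial order on X. -/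
/-!
Send every element to the pair of chain elements it hangs between: `x ∈ V` to `(x, x)` and a
connector centre `x` to `(l_x, u_x)`. Order `V` strictly by putting the chains one after another
in the order of their indices. Every non-trivial step of `⪯₀ ∪ ⊑` strictly increases this pair
lexicographically (the hypothesis `i ≤ j` is exactly what makes `l_x → x` and `x → u_x` go up), so
a cycle of the closure would make a strict order reflexive.
-/

/-- The one-step relation generating `⪯₁`: the chain orders `⪯₀`, the joins
`l_x ⊑ x ⊑ u_x` of the connectors, and the ordering `⊑_{ij}` of connector centres with
joins to the same pair of chains (`x ⊑_{ij} y` iff `l_x < l_y` and `u_x < u_y`). -/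
def connectorStep {X : Type*} {k : ℕ} (V : Set X) (c : X → Fin k)
    (r0 : X → X → Prop) (l u : X → X) : X → X → Prop := fun x y =>
  r0 x y ∨ (y ∉ V ∧ x = l y) ∨ (x ∉ V ∧ y = u x) ∨
  (x ∉ V ∧ y ∉ V ∧ x ≠ y ∧ c (l x) = c (l y) ∧ c (u x) = c (u y) ∧
    (r0 (l x) (l y) ∧ l x ≠ l y) ∧ (r0 (u x) (u y) ∧ u x ≠ u y))

open Relation

namespace Relation

variable {α β : Type*} {r : α → α → Prop} {s : β → β → Prop}

theorem ReflTransGen.eq_or_rel_map [IsTrans β s] (f : α → β)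
    (hf : ∀ a b, r a b → a ≠ b → s (f a) (f b)) {a b : α} (hab : ReflTransGen r a b) :
    a = b ∨ s (f a) (f b) := by
  induction hab with
  | refl => exact Or.inl rfl
  | @tail b d _ hbd ih =>
    by_cases hne : b = d
    · exact hne ▸ ih
    · rcases ih with rfl | hab
      · exact Or.inr (hf _ _ hbd hne)
      · exact Or.inr (_root_.trans hab (hf _ _ hbd hne))

theorem antisymm_reflTransGen_of_map [Std.Irrefl s] [IsTrans β s] (f : α → β)
    (hf : ∀ a b, r a b → a ≠ b → s (f a) (f b)) : Std.Antisymm (ReflTransGen r) where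
  antisymm a b hab hba := by
    rcases hab.eq_or_rel_map f hf with rfl | hab
    · rfl
    rcases hba.eq_or_rel_map f hf with rfl | hba
    · rfl
    exact (irrefl _ (_root_.trans hab hba)).elim

end Relation

section ConnectorClosure

variable {X : Type*} {k : ℕ} (V : Set X) (c : X → Fin k) (r0 : X → X → Prop) (l u : X → X)

def chainLT (a b : X) : Prop :=
  c a < c b ∨ c a = c b ∧ r0 a b ∧ a ≠ b

instance : Std.Irrefl (chainLT c r0) where
  irrefl _ h := h.elim (lt_irrefl _) fun h => h.2.2 rfl

theorem isTrans_chainLT (hr0antisymm : ∀ x y, r0 x y → r0 y x → x = y)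
    (hr0trans : ∀ x y z, r0 x y → r0 y z → r0 x z) : IsTrans X (chainLT c r0) where
  trans a b d hab hbd := by
    rcases hab with hab | ⟨hcab, rab, nab⟩ <;> rcases hbd with hbd | ⟨hcbd, rbd, -⟩
    · exact Or.inl (hab.trans hbd)
    · exact Or.inl (hcbd ▸ hab)
    · exact Or.inl (hcab ▸ hbd)
    · refine Or.inr ⟨hcab.trans hcbd, hr0trans _ _ _ rab rbd, ?_⟩
      rintro rfl
      exact nab (hr0antisymm _ _ rab rbd)

open Classical in
noncomputable def connectorEnds (x : X) : X × X :=
  if x ∈ V then (x, x) else (l x, u x)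

variable {V c r0 l u}

theorem chainLT_l_u (hij : ∀ x, x ∉ V → c (l x) ≤ c (u x))
    (hsame : ∀ x, x ∉ V → c (l x) = c (u x) → r0 (l x) (u x) ∧ l x ≠ u x)
    {x : X} (hx : x ∉ V) : chainLT c r0 (l x) (u x) :=
  (hij x hx).lt_or_eq.imp_right fun h => ⟨h, hsame x hx h⟩

theorem connectorEnds_lex_of_connectorStep
    (hr0mem : ∀ x y, r0 x y → x ∈ V ∧ y ∈ V ∧ c x = c y)
    (hl : ∀ x, x ∉ V → l x ∈ V) (hu : ∀ x, x ∉ V → u x ∈ V)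
    (hij : ∀ x, x ∉ V → c (l x) ≤ c (u x))
    (hsame : ∀ x, x ∉ V → c (l x) = c (u x) → r0 (l x) (u x) ∧ l x ≠ u x)
    {a b : X} (hab : connectorStep V c r0 l u a b) (hne : a ≠ b) :
    Prod.Lex (chainLT c r0) (chainLT c r0) (connectorEnds V l u a) (connectorEnds V l u b) := by
  rcases hab with hab | ⟨hb, rfl⟩ | ⟨ha, rfl⟩ | ⟨ha, hb, -, hcl, -, ⟨rl, nl⟩, -⟩
  · obtain ⟨ha, hb, hc⟩ := hr0mem a b hab
    simp only [connectorEnds, if_pos ha, if_pos hb]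
    exact .left _ _ (Or.inr ⟨hc, hab, hne⟩)
  · simp only [connectorEnds, if_pos (hl b hb), if_neg hb]
    exact .right _ (chainLT_l_u hij hsame hb)
  · simp only [connectorEnds, if_pos (hu a ha), if_neg ha]
    exact .left _ _ (chainLT_l_u hij hsame ha)
  · simp only [connectorEnds, if_neg ha, if_neg hb]
    exact .left _ _ (Or.inr ⟨hcl, rl, nl⟩)

end ConnectorClosure

theorem connector_closure_partialOrder_general {X : Type*} {k : ℕ} (V : Set X) (c : X → Fin k)
    (r0 : X → X → Prop) (l u : X → X)
    -- `⪯₀` (i.e. `r0`) is a partial order on `V` which is a disjoint union of the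
    -- `k` chains `V₁,…,V_k` (given by the chain-assignment `c`):
    (hr0mem : ∀ x y, r0 x y → x ∈ V ∧ y ∈ V ∧ c x = c y)
    (hr0antisymm : ∀ x y, r0 x y → r0 y x → x = y)
    (hr0trans : ∀ x y z, r0 x y → r0 y z → r0 x z)
    -- every `x ∈ X \ V` is the centre of a connector with joins `l x ∈ V_i`,
    -- `u x ∈ V_j`, `i ≤ j`, and `l x` strictly below `u x` when `i = j`:
    (hl : ∀ x, x ∉ V → l x ∈ V) (hu : ∀ x, x ∉ V → u x ∈ V)
    (hij : ∀ x, x ∉ V → c (l x) ≤ c (u x))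
    (hsame : ∀ x, x ∉ V → c (l x) = c (u x) → r0 (l x) (u x) ∧ l x ≠ u x)
    :
    IsPartialOrder X (Relation.ReflTransGen (connectorStep V c r0 l u)) := by
  have := isTrans_chainLT c r0 hr0antisymm hr0trans
  have := antisymm_reflTransGen_of_map (connectorEnds V l u) fun _ _ hab hne =>
    connectorEnds_lex_of_connectorStep hr0mem hl hu hij hsame hab hne
  exact {}

/-- Claim 1 of the paper: the reflexive–transitive closure `⪯₁` of `⪯₀ ∪ ⊑` is a
partial order on `X`. -/
theorem connector_closure_partialOrder {X : Type*} {k : ℕ} (V : Set X) (c : X → Fin k)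
    (r0 : X → X → Prop) (l u : X → X)
    -- `⪯₀` (i.e. `r0`) is a partial order on `V` which is a disjoint union of the
    -- `k` chains `V₁,…,V_k` (given by the chain-assignment `c`):
    (hr0mem : ∀ x y, r0 x y → x ∈ V ∧ y ∈ V ∧ c x = c y)
    (hr0refl : ∀ x ∈ V, r0 x x)
    (hr0antisymm : ∀ x y, r0 x y → r0 y x → x = y)
    (hr0trans : ∀ x y z, r0 x y → r0 y z → r0 x z)
    (hr0total : ∀ x ∈ V, ∀ y ∈ V, c x = c y → r0 x y ∨ r0 y x)
    -- every `x ∈ X \ V` is the centre of a connector with joins `l x ∈ V_i`,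
    -- `u x ∈ V_j`, `i ≤ j`, and `l x` strictly below `u x` when `i = j`:
    (hl : ∀ x, x ∉ V → l x ∈ V) (hu : ∀ x, x ∉ V → u x ∈ V)
    (hij : ∀ x, x ∉ V → c (l x) ≤ c (u x))
    (hsame : ∀ x, x ∉ V → c (l x) = c (u x) → r0 (l x) (u x) ∧ l x ≠ u x)
    :
    IsPartialOrder X (Relation.ReflTransGen (connectorStep V c r0 l u)) :=
  connector_closure_partialOrder_general V c r0 l u hr0mem hr0antisymm hr0trans hl hu hij hsame
end

section
/- In the poset P₁ = (X, ⪯₁) of the previous construction, every join of every connector is a cover pair: for each connector centre x ∈ X \ V with joins l_x and u_x, there is no z ∈ X with l_x ≺₁ z ≺₁ x, and no z ∈ X with x ≺₁ z ≺₁ u_x. -/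
/-!
Send each element of `X` to its lower join (`x ↦ x` on `V`, `x ↦ l x` off `V`) and to its
upper join, and compare elements of `V` lexicographically: first by chain index, then by `⪯₀`.
Both projections are monotone along every generating step of `⪯₁`, hence along `⪯₁`. So if
`z ⪯₁ v ⪯₁ z` with `v ∈ V`, both projections of `z` equal `v`, which forces `z = v` because
`l z ≠ u z` off `V`.
If `l_x ⪯₁ z ⪯₁ x` with `z ≠ x`, the last step into `x` is either `l_x → x`, and then `z = l_x`
by the above, or `w ⊑ x`, which puts `l_w` strictly below `l_x` although `l_x ⪯₁ w`.
Dually for `x ⪯₁ z ⪯₁ u_x`.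
-/

namespace ConnectorPoset

section ChainLex

variable {α ι : Type*} [PartialOrder ι] (c : α → ι) (r : α → α → Prop)

def ChainLex (a b : α) : Prop :=
  a = b ∨ c a < c b ∨ (c a = c b ∧ r a b)

variable {c r}

theorem ChainLex.of_le_of_eq_imp {a b : α} (hle : c a ≤ c b) (hr : c a = c b → r a b) :
    ChainLex c r a b :=
  .inr <| hle.lt_or_eq.imp_right fun h => ⟨h, hr h⟩

theorem ChainLex.trans (htrans : ∀ a b d, r a b → r b d → r a d) {a b d : α}
    (hab : ChainLex c r a b) (hbd : ChainLex c r b d) : ChainLex c r a d := by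
  rcases hab with rfl | hab | ⟨hab, rab⟩
  · exact hbd
  all_goals rcases hbd with rfl | hbd | ⟨hbd, rbd⟩
  · exact .inr (.inl hab)
  · exact .inr (.inl (hab.trans hbd))
  · exact .inr (.inl (hab.trans_eq hbd))
  · exact .inr (.inr ⟨hab, rab⟩)
  · exact .inr (.inl (hab.trans_lt hbd))
  · exact .inr (.inr ⟨hab.trans hbd, htrans _ _ _ rab rbd⟩)

theorem ChainLex.antisymm (hantisymm : ∀ a b, r a b → r b a → a = b) {a b : α}
    (hab : ChainLex c r a b) (hba : ChainLex c r b a) : a = b := by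
  rcases hab with rfl | hab | ⟨hab, rab⟩
  · rfl
  all_goals rcases hba with rfl | hba | ⟨hba, rba⟩
  · rfl
  · exact (hab.trans hba).false.elim
  · exact (hab.trans_eq hba).false.elim
  · rfl
  · exact (hba.trans_eq hab).false.elim
  · exact hantisymm _ _ rab rba

end ChainLex

section Connectors

variable {X : Type*} {k : ℕ} {V : Set X} {c : X → Fin k} {r0 : X → X → Prop} {l u : X → X}

structure IsConnectorSystem (V : Set X) (c : X → Fin k) (r0 : X → X → Prop) (l u : X → X) :
    Prop where
  r0_mem : ∀ x y, r0 x y → x ∈ V ∧ y ∈ V ∧ c x = c y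
  r0_antisymm : ∀ x y, r0 x y → r0 y x → x = y
  r0_trans : ∀ x y z, r0 x y → r0 y z → r0 x z
  lower_mem : ∀ x, x ∉ V → l x ∈ V
  upper_mem : ∀ x, x ∉ V → u x ∈ V
  chain_le : ∀ x, x ∉ V → c (l x) ≤ c (u x)
  lower_lt_upper : ∀ x, x ∉ V → c (l x) = c (u x) → r0 (l x) (u x) ∧ l x ≠ u x

namespace IsConnectorSystem

variable (hS : IsConnectorSystem V c r0 l u)
include hS

theorem chainLex_lower_upper {x : X} (hx : x ∉ V) : ChainLex c r0 (l x) (u x) :=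
  .of_le_of_eq_imp (hS.chain_le x hx) fun h => (hS.lower_lt_upper x hx h).1

theorem lower_ne_upper {x : X} (hx : x ∉ V) : l x ≠ u x := fun h =>
  (hS.lower_lt_upper x hx (congrArg c h)).2 h

theorem chainLex_of_r0 {x y : X} (h : r0 x y) : ChainLex c r0 x y :=
  .inr (.inr ⟨(hS.r0_mem x y h).2.2, h⟩)

open Classical in
theorem chainLex_lower_of_step {a b : X} (h : connectorStep V c r0 l u a b) :
    ChainLex c r0 (V.piecewise id l a) (V.piecewise id l b) := by
  rcases h with h | ⟨hb, rfl⟩ | ⟨ha, rfl⟩ | ⟨ha, hb, -, hc, -, ⟨hr, -⟩, -⟩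
  · obtain ⟨ha, hb, -⟩ := hS.r0_mem a b h
    simpa [ha, hb] using hS.chainLex_of_r0 h
  · simp [hb, hS.lower_mem b hb, ChainLex]
  · simpa [ha, hS.upper_mem a ha] using hS.chainLex_lower_upper ha
  · simpa [ha, hb] using .inr (.inr ⟨hc, hr⟩)

open Classical in
theorem chainLex_upper_of_step {a b : X} (h : connectorStep V c r0 l u a b) :
    ChainLex c r0 (V.piecewise id u a) (V.piecewise id u b) := by
  rcases h with h | ⟨hb, rfl⟩ | ⟨ha, rfl⟩ | ⟨ha, hb, -, -, hc, -, ⟨hr, -⟩⟩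
  · obtain ⟨ha, hb, -⟩ := hS.r0_mem a b h
    simpa [ha, hb] using hS.chainLex_of_r0 h
  · simpa [hb, hS.lower_mem b hb] using hS.chainLex_lower_upper hb
  · simp [ha, hS.upper_mem a ha, ChainLex]
  · simpa [ha, hb] using .inr (.inr ⟨hc, hr⟩)

theorem chainLex_of_reflTransGen {f : X → X}
    (hstep : ∀ a b, connectorStep V c r0 l u a b → ChainLex c r0 (f a) (f b)) {a b : X}
    (h : Relation.ReflTransGen (connectorStep V c r0 l u) a b) : ChainLex c r0 (f a) (f b) := by
  induction h with
  | refl => exact .inl rfl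
  | tail _ hst ih => exact ih.trans hS.r0_trans (hstep _ _ hst)

theorem eq_of_reflTransGen_of_mem {v z : X} (hv : v ∈ V)
    (hzv : Relation.ReflTransGen (connectorStep V c r0 l u) z v)
    (hvz : Relation.ReflTransGen (connectorStep V c r0 l u) v z) : z = v := by
  classical
  have hproj : ∀ f : X → X, (∀ a b, connectorStep V c r0 l u a b →
      ChainLex c r0 (V.piecewise id f a) (V.piecewise id f b)) → V.piecewise id f z = v :=
    fun f hstep => by
      simpa [hv] using (hS.chainLex_of_reflTransGen hstep hzv).antisymm hS.r0_antisymm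
        (hS.chainLex_of_reflTransGen hstep hvz)
  have hlz := hproj l fun _ _ => hS.chainLex_lower_of_step
  have huz := hproj u fun _ _ => hS.chainLex_upper_of_step
  by_cases hz : z ∈ V
  · simpa [hz] using hlz
  · simp only [Set.piecewise_eq_of_notMem _ _ _ hz] at hlz huz
    exact absurd (hlz.trans huz.symm) (hS.lower_ne_upper hz)

theorem eq_lower_or_eq_of_between {x z : X} (hx : x ∉ V)
    (hlz : Relation.ReflTransGen (connectorStep V c r0 l u) (l x) z)
    (hzx : Relation.ReflTransGen (connectorStep V c r0 l u) z x) : z = l x ∨ z = x := by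
  classical
  rcases hzx.cases_tail with rfl | ⟨w, hzw, hwx⟩
  · exact .inr rfl
  left
  rcases hwx with h | ⟨-, rfl⟩ | ⟨hw, rfl⟩ | ⟨hw, -, -, hc, -, ⟨hr, hne⟩, -⟩
  · exact absurd (hS.r0_mem _ _ h).2.1 hx
  · exact hS.eq_of_reflTransGen_of_mem (hS.lower_mem x hx) hzw hlz
  · exact absurd (hS.upper_mem w hw) hx
  · have hlw := hS.chainLex_of_reflTransGen (fun _ _ => hS.chainLex_lower_of_step) (hlz.trans hzw)
    simp only [Set.piecewise_eq_of_mem _ _ _ (hS.lower_mem x hx),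
      Set.piecewise_eq_of_notMem _ _ _ hw, id] at hlw
    exact absurd (hlw.antisymm hS.r0_antisymm (.inr (.inr ⟨hc, hr⟩))).symm hne

theorem eq_or_eq_upper_of_between {x z : X} (hx : x ∉ V)
    (hxz : Relation.ReflTransGen (connectorStep V c r0 l u) x z)
    (hzu : Relation.ReflTransGen (connectorStep V c r0 l u) z (u x)) : z = x ∨ z = u x := by
  classical
  rcases hxz.cases_head with rfl | ⟨a, hxa, haz⟩
  · exact .inl rfl
  right
  rcases hxa with h | ⟨ha, rfl⟩ | ⟨-, rfl⟩ | ⟨-, ha, -, -, hc, -, ⟨hr, hne⟩⟩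
  · exact absurd (hS.r0_mem _ _ h).1 hx
  · exact absurd (hS.lower_mem a ha) hx
  · exact hS.eq_of_reflTransGen_of_mem (hS.upper_mem x hx) hzu haz
  · have hau := hS.chainLex_of_reflTransGen (fun _ _ => hS.chainLex_upper_of_step) (haz.trans hzu)
    simp only [Set.piecewise_eq_of_mem _ _ _ (hS.upper_mem x hx),
      Set.piecewise_eq_of_notMem _ _ _ ha, id] at hau
    exact absurd (hau.antisymm hS.r0_antisymm (.inr (.inr ⟨hc, hr⟩))).symm hne

end IsConnectorSystem

end Connectors

end ConnectorPoset

theorem connector_joins_are_covers_general {X : Type*} {k : ℕ} (V : Set X) (c : X → Fin k)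
    (r0 : X → X → Prop) (l u : X → X)
    -- `⪯₀` (i.e. `r0`) is a partial order on `V` which is a disjoint union of the
    -- `k` chains `V₁,…,V_k` (given by the chain-assignment `c`):
    (hr0mem : ∀ x y, r0 x y → x ∈ V ∧ y ∈ V ∧ c x = c y)
    (hr0antisymm : ∀ x y, r0 x y → r0 y x → x = y)
    (hr0trans : ∀ x y z, r0 x y → r0 y z → r0 x z)
    -- every `x ∈ X \ V` is the centre of a connector with joins `l x ∈ V_i`,
    -- `u x ∈ V_j`, `i ≤ j`, and `l x` strictly below `u x` when `i = j`:
    (hl : ∀ x, x ∉ V → l x ∈ V) (hu : ∀ x, x ∉ V → u x ∈ V)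
    (hij : ∀ x, x ∉ V → c (l x) ≤ c (u x))
    (hsame : ∀ x, x ∉ V → c (l x) = c (u x) → r0 (l x) (u x) ∧ l x ≠ u x)
    :
    ∀ x, x ∉ V →
      (¬ ∃ z : X, (Relation.ReflTransGen (connectorStep V c r0 l u) (l x) z ∧ l x ≠ z) ∧
        (Relation.ReflTransGen (connectorStep V c r0 l u) z x ∧ z ≠ x)) ∧
      (¬ ∃ z : X, (Relation.ReflTransGen (connectorStep V c r0 l u) x z ∧ x ≠ z) ∧
        (Relation.ReflTransGen (connectorStep V c r0 l u) z (u x) ∧ z ≠ u x)) := by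
  have hS : ConnectorPoset.IsConnectorSystem V c r0 l u :=
    ⟨hr0mem, hr0antisymm, hr0trans, hl, hu, hij, hsame⟩
  intro x hx
  constructor
  · rintro ⟨z, ⟨hlz, hne_l⟩, hzx, hne_x⟩
    exact (hS.eq_lower_or_eq_of_between hx hlz hzx).elim (hne_l ∘ Eq.symm) hne_x
  · rintro ⟨z, ⟨hxz, hne_x⟩, hzu, hne_u⟩
    exact (hS.eq_or_eq_upper_of_between hx hxz hzu).elim (hne_x ∘ Eq.symm) hne_u

/-- In the poset `P₁ = (X, ⪯₁)` (the reflexive–transitive closure of `⪯₀ ∪ ⊑`), every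
join of every connector is a cover pair: for each connector centre `x ∈ X \ V`, no
element lies strictly between `l_x` and `x`, and none lies strictly between `x` and
`u_x`. -/
theorem connector_joins_are_covers {X : Type*} {k : ℕ} (V : Set X) (c : X → Fin k)
    (r0 : X → X → Prop) (l u : X → X)
    -- `⪯₀` (i.e. `r0`) is a partial order on `V` which is a disjoint union of the
    -- `k` chains `V₁,…,V_k` (given by the chain-assignment `c`):
    (hr0mem : ∀ x y, r0 x y → x ∈ V ∧ y ∈ V ∧ c x = c y)
    (hr0refl : ∀ x ∈ V, r0 x x)
    (hr0antisymm : ∀ x y, r0 x y → r0 y x → x = y)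
    (hr0trans : ∀ x y z, r0 x y → r0 y z → r0 x z)
    (hr0total : ∀ x ∈ V, ∀ y ∈ V, c x = c y → r0 x y ∨ r0 y x)
    -- every `x ∈ X \ V` is the centre of a connector with joins `l x ∈ V_i`,
    -- `u x ∈ V_j`, `i ≤ j`, and `l x` strictly below `u x` when `i = j`:
    (hl : ∀ x, x ∉ V → l x ∈ V) (hu : ∀ x, x ∉ V → u x ∈ V)
    (hij : ∀ x, x ∉ V → c (l x) ≤ c (u x))
    (hsame : ∀ x, x ∉ V → c (l x) = c (u x) → r0 (l x) (u x) ∧ l x ≠ u x)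
    :
    ∀ x, x ∉ V →
      (¬ ∃ z : X, (Relation.ReflTransGen (connectorStep V c r0 l u) (l x) z ∧ l x ≠ z) ∧
        (Relation.ReflTransGen (connectorStep V c r0 l u) z x ∧ z ≠ x)) ∧
      (¬ ∃ z : X, (Relation.ReflTransGen (connectorStep V c r0 l u) x z ∧ x ≠ z) ∧
        (Relation.ReflTransGen (connectorStep V c r0 l u) z (u x) ∧ z ≠ u x)) :=
  connector_joins_are_covers_general V c r0 l u hr0mem hr0antisymm hr0trans hl hu hij hsame
end

section
/- Let P = (X, ⪯) be a finite poset of width k, partitioned into k chains C₁,…,C_k by Dilworth's theorem, and let h = max_i |C_i|. Construct the graph G with vertex set V = {a_v, b_v : v ∈ X} ∪ {o₁,…,o_h}, and edges: {o_m, a_v} and {o_m, b_v} for v ∈ C_i iff m ≤ |{u ∈ C_i : u ⪯ v}|; and {a_u, b_v} for u ∈ C_i, v ∈ C_j with i ≠ j iff u ⪯ v; and no other edges. Then for all u, v ∈ X lying in distinct chains, u ⪯ v holds if and only if {a_u, b_v} ∈ E(G), and for u, v in the same chain C_i, u ⪯ v holds if and only if every o_m adjacent to a_u is adjacent to a_v.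 -/
/-! On a chain `chainRank` is strictly monotone, so it determines the order there. The `o_m`
adjacent to `a_v` are those with `m < chainRank v`, and since `chainRank v ≤ h` this
neighbourhood recovers `chainRank v`. Across chains the order is stored directly in the
edges `{a_u, b_v}`. -/

/-- The number of elements of the chain of `v` that are `≤ v` (the 1-based rank of `v`
within its chain). -/
noncomputable def chainRank {X : Type*} {k : ℕ} [PartialOrder X] (ch : X → Fin k)
    (v : X) : ℕ :=
  {u : X | ch u = ch v ∧ u ≤ v}.ncard

/-- The graph `G` of Theorem 5: vertices `a_v = inl v`, `b_v = inr (inl v)` for `v ∈ X`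
and `o_m = inr (inr m)`; edges `{o_m, a_v}` and `{o_m, b_v}` iff `m ≤ |{u ∈ C_i : u ⪯ v}|`
(where `v ∈ C_i` and `m` is 1-based, i.e. `m+1` for `m : Fin h`), and `{a_u, b_v}` for
`u, v` in distinct chains iff `u ⪯ v`; and no other edges. -/
noncomputable def posetGraph {X : Type*} {k : ℕ} [PartialOrder X] (ch : X → Fin k)
    (h : ℕ) : SimpleGraph (X ⊕ X ⊕ Fin h) :=
  SimpleGraph.fromRel (fun p q =>
    match p, q with
    | Sum.inr (Sum.inr m), Sum.inl v => (m : ℕ) + 1 ≤ chainRank ch v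
    | Sum.inr (Sum.inr m), Sum.inr (Sum.inl v) => (m : ℕ) + 1 ≤ chainRank ch v
    | Sum.inl u, Sum.inr (Sum.inl v) => ch u ≠ ch v ∧ u ≤ v
    | _, _ => False)

section ChainRank

variable {X : Type*} {k : ℕ} [PartialOrder X] [Finite X] (ch : X → Fin k)

theorem chainRank_le_ncard_chain (v : X) : chainRank ch v ≤ {u : X | ch u = ch v}.ncard :=
  Set.ncard_le_ncard (fun _ hu => hu.1) (Set.toFinite _)

variable {ch}

theorem chainRank_le_chainRank {u v : X} (he : ch u = ch v) (huv : u ≤ v) :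
    chainRank ch u ≤ chainRank ch v :=
  Set.ncard_le_ncard (fun _ hw => ⟨hw.1.trans he, hw.2.trans huv⟩) (Set.toFinite _)

theorem chainRank_lt_chainRank {u v : X} (he : ch u = ch v) (huv : u < v) :
    chainRank ch u < chainRank ch v := by
  refine Set.ncard_lt_ncard ⟨fun _ hw => ⟨hw.1.trans he, hw.2.trans huv.le⟩, fun hsub => ?_⟩
    (Set.toFinite _)
  exact huv.not_ge (hsub ⟨rfl, le_rfl⟩).2

theorem chainRank_le_chainRank_iff {u v : X} (he : ch u = ch v) (hcomp : u ≤ v ∨ v ≤ u) :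
    chainRank ch u ≤ chainRank ch v ↔ u ≤ v := by
  refine ⟨fun hr => ?_, chainRank_le_chainRank he⟩
  by_contra huv
  have hvu : v < u := lt_of_le_of_ne (hcomp.resolve_left huv) fun e => huv e.ge
  exact (chainRank_lt_chainRank he.symm hvu).not_ge hr

end ChainRank

section PosetGraph

variable {X : Type*} {k : ℕ} [PartialOrder X] {ch : X → Fin k} {h : ℕ}

theorem posetGraph_adj_inl_inr {u v : X} :
    (posetGraph ch h).Adj (Sum.inl u) (Sum.inr (Sum.inl v)) ↔ ch u ≠ ch v ∧ u ≤ v := by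
  simp [posetGraph]

theorem posetGraph_adj_inr_inl {v : X} {m : Fin h} :
    (posetGraph ch h).Adj (Sum.inr (Sum.inr m)) (Sum.inl v) ↔ (m : ℕ) + 1 ≤ chainRank ch v := by
  simp [posetGraph]

end PosetGraph

theorem forall_fin_succ_le_imp_iff {h a b : ℕ} (ha : a ≤ h) :
    (∀ m : Fin h, (m : ℕ) + 1 ≤ a → (m : ℕ) + 1 ≤ b) ↔ a ≤ b := by
  refine ⟨fun hab => ?_, fun hab m hm => hm.trans hab⟩
  rcases Nat.eq_zero_or_pos a with rfl | ha0
  · exact Nat.zero_le b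
  · have hpred : a - 1 + 1 = a := Nat.sub_add_cancel ha0
    exact hpred ▸ hab ⟨a - 1, by omega⟩ hpred.le

/-- Correctness of the encoding of a finite poset `P = (X, ⪯)` of width `k`,
partitioned into `k` chains by `ch`, in the graph `posetGraph`: for `u, v` in distinct
chains, `u ⪯ v` iff `{a_u, b_v}` is an edge; for `u, v` in the same chain, `u ⪯ v` iff
every `o_m` adjacent to `a_u` is adjacent to `a_v`. -/
theorem posetGraph_encodes_poset {X : Type*} [Fintype X] [PartialOrder X] (k : ℕ)
    (ch : X → Fin k) (hch : ∀ u v : X, ch u = ch v → u ≤ v ∨ v ≤ u)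
    (h : ℕ) (hh : h = Finset.univ.sup (fun i : Fin k => {v : X | ch v = i}.ncard)) :
    (∀ u v : X, ch u ≠ ch v →
      (u ≤ v ↔ (posetGraph ch h).Adj (Sum.inl u) (Sum.inr (Sum.inl v)))) ∧
    (∀ u v : X, ch u = ch v →
      (u ≤ v ↔ ∀ m : Fin h,
        (posetGraph ch h).Adj (Sum.inr (Sum.inr m)) (Sum.inl u) →
        (posetGraph ch h).Adj (Sum.inr (Sum.inr m)) (Sum.inl v))) := by
  have hrank_le : ∀ v : X, chainRank ch v ≤ h := fun v =>
    (chainRank_le_ncard_chain ch v).trans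
      (hh ▸ Finset.le_sup (f := fun i : Fin k => {v : X | ch v = i}.ncard) (Finset.mem_univ _))
  refine ⟨fun u v hne => ?_, fun u v he => ?_⟩
  · rw [posetGraph_adj_inl_inr]
    exact (and_iff_right hne).symm
  · simp only [posetGraph_adj_inr_inl]
    rw [forall_fin_succ_le_imp_iff (hrank_le u), chainRank_le_chainRank_iff he (hch u v he)]
end

section
/- With P, chains C₁,…,C_k, and the graph G as constructed above (vertices a_v, b_v for v ∈ X and o₁,…,o_h; edges {o_m, a_v}, {o_m, b_v} for v ∈ C_i iff m ≤ |{u ∈ C_i : u ⪯ v}|, and {a_u, b_v} for u ∈ C_i, v ∈ C_j, i ≠ j iff u ⪯ v), the partition (O, A₁,…,A_k, B₁,…,B_k) with O = {o₁,…,o_h}, A_i = {a_v : v ∈ C_i}, B_i = {b_v : v ∈ C_i}, together with the linear orders defined in the paper (chain order within each A_i and B_i, index order on O, interleavings for O versus A_i or B_i, and a_u ≤ b_v iff u ⪯ v for A_i versus B_j with i ≠ j, completed to a total order), witnesses that G is an inversion-free proper (2k+1)-mixed-thin graph. -/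
/-- The partition of the vertices of `posetGraph` into `2k+1` parts:
`O` is part `0`, `A_i` is part `i` and `B_i` is part `k + i` (for `1 ≤ i ≤ k`). -/
def posetGraphPart {X : Type*} {k : ℕ} (ch : X → Fin k) (h : ℕ) :
    (X ⊕ X ⊕ Fin h) → Fin (2 * k + 1) := fun w =>
  match w with
  | Sum.inl v => ⟨(ch v : ℕ) + 1, by have := (ch v).isLt; omega⟩
  | Sum.inr (Sum.inl v) => ⟨(ch v : ℕ) + k + 1, by have := (ch v).isLt; omega⟩
  | Sum.inr (Sum.inr _) => ⟨0, by omega⟩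

open Set

section CountBelow

variable {X : Type*} [PartialOrder X]

noncomputable def countBelow (C : Set X) (v : X) : ℕ :=
  {u | u ∈ C ∧ u ≤ v}.ncard

variable [Finite X]

theorem countBelow_mono (C : Set X) : Monotone (countBelow C) := fun _ _ huv =>
  ncard_le_ncard (fun _ hw => ⟨hw.1, hw.2.trans huv⟩) (toFinite _)

theorem countBelow_le_countBelow_iff {C : Set X} (hC : IsChain (· ≤ ·) C) {u : X} (hu : u ∈ C)
    (v : X) : countBelow C u ≤ countBelow C v ↔ u ≤ v := by
  refine ⟨fun hle => ?_, fun huv => countBelow_mono C huv⟩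
  by_contra huv
  have hsub : {w | w ∈ C ∧ w ≤ v} ⊂ {w | w ∈ C ∧ w ≤ u} := by
    refine (ssubset_iff_of_subset ?_).mpr ⟨u, ⟨hu, le_rfl⟩, fun h => huv h.2⟩
    rintro w ⟨hw, hwv⟩
    refine ⟨hw, ?_⟩
    rcases eq_or_ne w u with rfl | hne
    · exact le_rfl
    · exact (hC hw hu hne).resolve_right fun huw => huv (huw.trans hwv)
  exact (ncard_lt_ncard hsub (toFinite _)).not_ge hle

end CountBelow

theorem StrictMono.le_iff_le_of_isChain {α β : Type*} [PartialOrder α] [LinearOrder β]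
    {f : α → β} (hf : StrictMono f) {s : Set α} (hs : IsChain (· ≤ ·) s) {a b : α}
    (ha : a ∈ s) (hb : b ∈ s) : f a ≤ f b ↔ a ≤ b := by
  refine ⟨fun hab => ?_, fun hab => hf.monotone hab⟩
  rcases eq_or_ne a b with rfl | hne
  · exact le_rfl
  · exact (hs ha hb hne).resolve_right fun hba => (hf (hba.lt_of_ne hne.symm)).not_ge hab

theorem MixedThinWitness.of_key_s17 {V L : Type*} [PartialOrder V] [LinearOrder L] {n : ℕ}
    (G : SimpleGraph V) (c : V → Fin n) (key : Fin n → Fin n → V → L)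
    (P : Fin n → Fin n → Prop) (hchain : ∀ p, IsChain (· ≤ ·) {v | c v = p})
    (hmono : ∀ i j, StrictMono (key i j))
    (hinj : ∀ i j, InjOn (key i j) {v | c v = i ∨ c v = j})
    (hadj : ∀ x y, c x ≤ c y →
      (G.Adj x y ↔ P (c x) (c y) ∧ key (c x) (c y) x ≤ key (c x) (c y) y)) :
    MixedThinWitness G c (fun i j u v => key i j u ≤ key i j v) (fun _ _ => False) := by
  intro i j hij
  have hE : ∀ u v, mixedEdge G (fun _ _ => False) i j u v ↔ G.Adj u v := by
    simp [mixedEdge]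
  have hpart : ∀ p u v, c u = p → c v = p →
      (key i j u ≤ key i j v ↔ key p p u ≤ key p p v) := fun p u v hu hv => by
    rw [(hmono i j).le_iff_le_of_isChain (hchain p) hu hv,
      (hmono p p).le_iff_le_of_isChain (hchain p) hu hv]
  have hedge : ∀ x y, c x = i → c y = j → (G.Adj x y ↔ P i j ∧ key i j x ≤ key i j y) :=
    fun x y hx hy => by simpa only [hx, hy] using hadj x y (by rw [hx, hy]; exact hij)
  -- an edge from `V_j` back to `V_i` cannot pass over a vertex between its ends in key order
  have hback : ∀ a v w, c a = j → (c v = i ∨ c v = j) → c w = i → G.Adj a w →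
      key i j a ≤ key i j v → key i j v ≤ key i j w → v = w :=
    fun a v w ha hv hw haw hav hvw =>
      hinj i j hv (Or.inl hw) (hvw.antisymm (((hedge w a hw ha).1 haw.symm).2.trans hav))
  refine ⟨fun _ _ => le_rfl, fun u v hu hv huv hvu => hinj i j hu hv (huv.antisymm hvu),
    fun _ _ _ _ _ _ => le_trans, fun _ _ _ _ => le_total _ _,
    fun u v hu hv => hpart i u v hu hv, fun u v hu hv => hpart j u v hu hv, ?_, ?_⟩
  · rintro u v w (⟨hu, hv, hw⟩ | ⟨hu, hv, hw⟩) huv - hvw hne huw <;> rw [hE] at huw ⊢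
    · exact (hedge v w hv hw).2 ⟨((hedge u w hu hw).1 huw).1, hvw⟩
    · exact absurd (hback u v w hu (Or.inr hv) hw huw huv hvw) hne
  · rintro u v w (⟨hv, hw, hu⟩ | ⟨hv, hw, hu⟩) huv - hvw hne huw <;> rw [hE] at huw ⊢
    · exact absurd (hback u v w hu (Or.inl hv) hw huw huv hvw) hne
    · exact (hedge u v hu hv).2 ⟨((hedge u w hu hw).1 huw).1, huv⟩

/-- The pairs of parts joined by edges: `O` with every `A_i` and `B_i`, and `A_i` with `B_j`
for `i ≠ j`. -/
def posetGraphAdjParts (k : ℕ) (i j : Fin (2 * k + 1)) : Prop :=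
  (i : ℕ) = 0 ∧ (j : ℕ) ≠ 0 ∨ (i : ℕ) ≠ 0 ∧ (i : ℕ) ≤ k ∧ k < j ∧ (j : ℕ) ≠ i + k

section PosetGraph

variable {X : Type*} {k : ℕ} (ch : X → Fin k) (h : ℕ)

def posetGraphPartChain (p : Fin (2 * k + 1)) : Set X :=
  {u | posetGraphPart ch h (.inl u) = p ∨ posetGraphPart ch h (.inr (.inl u)) = p}

theorem posetGraphPart_inl_val (v : X) : (posetGraphPart ch h (.inl v) : ℕ) = ch v + 1 := rfl

theorem posetGraphPart_inr_inl_val (v : X) :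
    (posetGraphPart ch h (.inr (.inl v)) : ℕ) = ch v + k + 1 := rfl

theorem posetGraphPart_inr_inr_val (m : Fin h) : (posetGraphPart ch h (.inr (.inr m)) : ℕ) = 0 :=
  rfl

theorem posetGraphPartChain_inl (v : X) :
    posetGraphPartChain ch h (posetGraphPart ch h (.inl v)) = {u | ch u = ch v} := by
  ext u
  simp only [posetGraphPartChain, posetGraphPart, mem_ofPred_eq, Fin.ext_iff]
  omega

theorem posetGraphPartChain_inr_inl (v : X) :
    posetGraphPartChain ch h (posetGraphPart ch h (.inr (.inl v))) = {u | ch u = ch v} := by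
  ext u
  simp only [posetGraphPartChain, posetGraphPart, mem_ofPred_eq, Fin.ext_iff]
  omega

variable [PartialOrder X]

theorem chainRank_eq_countBelow (v : X) : chainRank ch v = countBelow {u | ch u = ch v} v := rfl

/-- `O`, `A` and `B` occupy the residues `0`, `1`, `2` mod 3, so keys of vertices of different
kinds are compared by this coordinate alone. -/
noncomputable def posetGraphLevel (C : Set X) : X ⊕ X ⊕ Fin h → ℕ
  | .inl u => 3 * countBelow C u + 1
  | .inr (.inl v) => 3 * countBelow C v + 2
  | .inr (.inr m) => 3 * ((m : ℕ) + 1)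

noncomputable def posetGraphKey (C : Set X) (w : X ⊕ X ⊕ Fin h) :
    ℕ ×ₗ LinearExtension (X ⊕ X ⊕ Fin h) :=
  toLex (posetGraphLevel h C w, toLinearExtension w)

noncomputable def posetGraphPairKey (i j : Fin (2 * k + 1)) :
    X ⊕ X ⊕ Fin h → ℕ ×ₗ LinearExtension (X ⊕ X ⊕ Fin h) :=
  posetGraphKey h (posetGraphPartChain ch h (if (i : ℕ) = 0 then j else i))

theorem isChain_posetGraphPart (hch : ∀ u v : X, ch u = ch v → u ≤ v ∨ v ≤ u)
    (p : Fin (2 * k + 1)) : IsChain (· ≤ ·) {w | posetGraphPart ch h w = p} := by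
  rintro (u | u | m) rfl (v | v | m') hv -
  all_goals simp only [mem_ofPred_eq, posetGraphPart, Fin.ext_iff] at hv
  all_goals simp only [Sum.inl_le_inl_iff, Sum.inr_le_inr_iff, Sum.not_inl_le_inr,
    Sum.not_inr_le_inl, or_self]
  all_goals first | omega | exact le_total m m' | exact hch u v (Fin.ext (by omega))

theorem posetGraphKey_injective (C : Set X) : Function.Injective (posetGraphKey h C) :=
  fun _ _ hxy => congrArg (fun z => (ofLex z).2) hxy

theorem posetGraphKey_le_iff_of_level_ne (C : Set X) {x y : X ⊕ X ⊕ Fin h}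
    (hxy : posetGraphLevel h C x ≠ posetGraphLevel h C y) :
    posetGraphKey h C x ≤ posetGraphKey h C y ↔ posetGraphLevel h C x < posetGraphLevel h C y := by
  rw [posetGraphKey, posetGraphKey, Prod.Lex.toLex_le_toLex]
  exact or_iff_left fun heq => hxy heq.1

theorem posetGraphPairKey_inr_inr_le_inl_iff (m : Fin h) (v : X) :
    posetGraphPairKey ch h (posetGraphPart ch h (.inr (.inr m))) (posetGraphPart ch h (.inl v))
        (.inr (.inr m)) ≤
      posetGraphPairKey ch h (posetGraphPart ch h (.inr (.inr m))) (posetGraphPart ch h (.inl v))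
        (.inl v) ↔ (m : ℕ) + 1 ≤ chainRank ch v := by
  rw [posetGraphPairKey, posetGraphPart_inr_inr_val, if_pos rfl, posetGraphPartChain_inl,
    posetGraphKey_le_iff_of_level_ne]
  all_goals simp only [posetGraphLevel, chainRank_eq_countBelow]; omega

theorem posetGraphPairKey_inr_inr_le_inr_inl_iff (m : Fin h) (v : X) :
    posetGraphPairKey ch h (posetGraphPart ch h (.inr (.inr m)))
        (posetGraphPart ch h (.inr (.inl v))) (.inr (.inr m)) ≤
      posetGraphPairKey ch h (posetGraphPart ch h (.inr (.inr m)))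
        (posetGraphPart ch h (.inr (.inl v))) (.inr (.inl v)) ↔
      (m : ℕ) + 1 ≤ chainRank ch v := by
  rw [posetGraphPairKey, posetGraphPart_inr_inr_val, if_pos rfl, posetGraphPartChain_inr_inl,
    posetGraphKey_le_iff_of_level_ne]
  all_goals simp only [posetGraphLevel, chainRank_eq_countBelow]; omega

variable [Finite X]

theorem posetGraphLevel_mono (C : Set X) : Monotone (posetGraphLevel h C) := by
  rintro (u | u | m) (v | v | m') huv
  all_goals simp only [Sum.inl_le_inl_iff, Sum.inr_le_inr_iff, Sum.not_inl_le_inr,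
    Sum.not_inr_le_inl] at huv
  all_goals simp only [posetGraphLevel]
  · have := countBelow_mono C huv; omega
  · have := countBelow_mono C huv; omega
  · have : (m : ℕ) ≤ m' := huv; omega

theorem posetGraphKey_strictMono (C : Set X) : StrictMono (posetGraphKey h C) := fun _ _ hxy =>
  Prod.Lex.toLex_strictMono <| Prod.lt_iff.mpr <| .inr
    ⟨posetGraphLevel_mono h C hxy.le, toLinearExtension.monotone hxy.le |>.lt_of_ne hxy.ne⟩

theorem posetGraphPairKey_inl_le_inr_inl_iff (hch : ∀ u v : X, ch u = ch v → u ≤ v ∨ v ≤ u)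
    (u v : X) :
    posetGraphPairKey ch h (posetGraphPart ch h (.inl u)) (posetGraphPart ch h (.inr (.inl v)))
        (.inl u) ≤
      posetGraphPairKey ch h (posetGraphPart ch h (.inl u)) (posetGraphPart ch h (.inr (.inl v)))
        (.inr (.inl v)) ↔ u ≤ v := by
  have hC : IsChain (· ≤ ·) {w | ch w = ch u} := fun a ha b hb _ => hch a b (ha.trans hb.symm)
  rw [posetGraphPairKey, posetGraphPart_inl_val, if_neg (Nat.add_one_ne_zero _),
    posetGraphPartChain_inl, posetGraphKey_le_iff_of_level_ne,
    ← countBelow_le_countBelow_iff hC (u := u) rfl v]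
  all_goals simp only [posetGraphLevel]; omega

theorem posetGraph_adj_iff (hch : ∀ u v : X, ch u = ch v → u ≤ v ∨ v ≤ u)
    (x y : X ⊕ X ⊕ Fin h) (hxy : posetGraphPart ch h x ≤ posetGraphPart ch h y) :
    (posetGraph ch h).Adj x y ↔
      posetGraphAdjParts k (posetGraphPart ch h x) (posetGraphPart ch h y) ∧
        posetGraphPairKey ch h (posetGraphPart ch h x) (posetGraphPart ch h y) x ≤
          posetGraphPairKey ch h (posetGraphPart ch h x) (posetGraphPart ch h y) y := by
  have hlt := fun u : X => (ch u).isLt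
  rw [Fin.le_def] at hxy
  rcases x with u | u | m <;> rcases y with v | v | m' <;>
    simp only [posetGraphPart_inl_val, posetGraphPart_inr_inl_val,
      posetGraphPart_inr_inr_val] at hxy <;>
    simp only [posetGraph, SimpleGraph.fromRel_adj, posetGraphAdjParts, posetGraphPart_inl_val,
      posetGraphPart_inr_inl_val, posetGraphPart_inr_inr_val,
      posetGraphPairKey_inl_le_inr_inl_iff ch h hch, posetGraphPairKey_inr_inr_le_inl_iff,
      posetGraphPairKey_inr_inr_le_inr_inl_iff, ne_eq, reduceCtorEq, not_false_eq_true,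
      not_true_eq_false, Sum.inr.injEq, true_and, and_true, or_false, false_or, and_false,
      false_and, Fin.ext_iff]
  case inl.inl => exact iff_of_false id fun hparts => by have := hlt v; omega
  case inr.inl.inr.inl => exact iff_of_false id fun hparts => by omega
  case inl.inr.inl => exact and_congr_left' (by omega)
  case inr.inl.inl => have := hlt v; omega
  all_goals omega

end PosetGraph

theorem posetGraph_invFree_proper_mixed_thin_general {X : Type*} [Fintype X] [PartialOrder X]
    (k : ℕ) (ch : X → Fin k) (hch : ∀ u v : X, ch u = ch v → u ≤ v ∨ v ≤ u)
    (h : ℕ) :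
    ∃ le : Fin (2 * k + 1) → Fin (2 * k + 1) → (X ⊕ X ⊕ Fin h) → (X ⊕ X ⊕ Fin h) → Prop,
      MixedThinWitness (posetGraph ch h) (posetGraphPart ch h) le (fun _ _ => False) ∧
      -- the index order on `O`
      (∀ m m' : Fin h,
        le (posetGraphPart ch h (Sum.inr (Sum.inr m))) (posetGraphPart ch h (Sum.inr (Sum.inr m)))
          (Sum.inr (Sum.inr m)) (Sum.inr (Sum.inr m')) ↔ m ≤ m') ∧
      -- the chain order within each `A_i`
      (∀ u v : X, ch u = ch v →
        (le (posetGraphPart ch h (Sum.inl u)) (posetGraphPart ch h (Sum.inl u))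
          (Sum.inl u) (Sum.inl v) ↔ u ≤ v)) ∧
      -- the chain order within each `B_i`
      (∀ u v : X, ch u = ch v →
        (le (posetGraphPart ch h (Sum.inr (Sum.inl u))) (posetGraphPart ch h (Sum.inr (Sum.inl u)))
          (Sum.inr (Sum.inl u)) (Sum.inr (Sum.inl v)) ↔ u ≤ v)) ∧
      -- between `A_i` and `B_j` for `i ≠ j`: `a_u ≤ b_v` iff `u ⪯ v`
      (∀ u v : X, ch u ≠ ch v →
        (le (posetGraphPart ch h (Sum.inl u)) (posetGraphPart ch h (Sum.inr (Sum.inl v)))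
          (Sum.inl u) (Sum.inr (Sum.inl v)) ↔ u ≤ v)) := by
  have hchain := isChain_posetGraphPart ch h hch
  have hmono : ∀ i j, StrictMono (posetGraphPairKey ch h i j) :=
    fun _ _ => posetGraphKey_strictMono h _
  refine ⟨fun i j u v => posetGraphPairKey ch h i j u ≤ posetGraphPairKey ch h i j v,
    MixedThinWitness.of_key_s17 _ _ _ (posetGraphAdjParts k) hchain hmono
      (fun _ _ => (posetGraphKey_injective h _).injOn) (posetGraph_adj_iff ch h hch),
    fun m m' => ?_, fun u v huv => ?_, fun u v huv => ?_,
    fun u v _ => posetGraphPairKey_inl_le_inr_inl_iff ch h hch u v⟩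
  · have hm' : posetGraphPart ch h (.inr (.inr m')) = posetGraphPart ch h (.inr (.inr m)) := rfl
    exact ((hmono _ _).le_iff_le_of_isChain (hchain _) rfl hm').trans
      (Sum.inr_le_inr_iff.trans Sum.inr_le_inr_iff)
  · have hv : posetGraphPart ch h (.inl v) = posetGraphPart ch h (.inl u) := by
      simp only [posetGraphPart, huv]
    exact ((hmono _ _).le_iff_le_of_isChain (hchain _) rfl hv).trans Sum.inl_le_inl_iff
  · have hv : posetGraphPart ch h (.inr (.inl v)) = posetGraphPart ch h (.inr (.inl u)) := by
      simp only [posetGraphPart, huv]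
    exact ((hmono _ _).le_iff_le_of_isChain (hchain _) rfl hv).trans
      (Sum.inr_le_inr_iff.trans Sum.inl_le_inl_iff)

/-- The partition `(O, A₁,…,A_k, B₁,…,B_k)` of `posetGraph`, together with suitable
linear orders (the chain order within each `A_i` and `B_i`, the index order on `O`,
and `a_u ≤ b_v` iff `u ⪯ v` between `A_i` and `B_j` for `i ≠ j`, completed to total
orders on the unions of pairs of parts), witnesses that `posetGraph` is an
inversion-free proper `(2k+1)`-mixed-thin graph (with all `E_{i,j} = E`). -/
theorem posetGraph_invFree_proper_mixed_thin {X : Type*} [Fintype X] [PartialOrder X]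
    (k : ℕ) (ch : X → Fin k) (hch : ∀ u v : X, ch u = ch v → u ≤ v ∨ v ≤ u)
    (h : ℕ) (hh : h = Finset.univ.sup (fun i : Fin k => {v : X | ch v = i}.ncard)) :
    ∃ le : Fin (2 * k + 1) → Fin (2 * k + 1) → (X ⊕ X ⊕ Fin h) → (X ⊕ X ⊕ Fin h) → Prop,
      MixedThinWitness (posetGraph ch h) (posetGraphPart ch h) le (fun _ _ => False) ∧
      -- the index order on `O`
      (∀ m m' : Fin h,
        le (posetGraphPart ch h (Sum.inr (Sum.inr m))) (posetGraphPart ch h (Sum.inr (Sum.inr m)))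
          (Sum.inr (Sum.inr m)) (Sum.inr (Sum.inr m')) ↔ m ≤ m') ∧
      -- the chain order within each `A_i`
      (∀ u v : X, ch u = ch v →
        (le (posetGraphPart ch h (Sum.inl u)) (posetGraphPart ch h (Sum.inl u))
          (Sum.inl u) (Sum.inl v) ↔ u ≤ v)) ∧
      -- the chain order within each `B_i`
      (∀ u v : X, ch u = ch v →
        (le (posetGraphPart ch h (Sum.inr (Sum.inl u))) (posetGraphPart ch h (Sum.inr (Sum.inl u)))
          (Sum.inr (Sum.inl u)) (Sum.inr (Sum.inl v)) ↔ u ≤ v)) ∧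
      -- between `A_i` and `B_j` for `i ≠ j`: `a_u ≤ b_v` iff `u ⪯ v`
      (∀ u v : X, ch u ≠ ch v →
        (le (posetGraphPart ch h (Sum.inl u)) (posetGraphPart ch h (Sum.inr (Sum.inl v)))
          (Sum.inl u) (Sum.inr (Sum.inl v)) ↔ u ≤ v)) :=
  posetGraph_invFree_proper_mixed_thin_general k ch hch h
end

section
/- In the lower-bound graph G of Proposition 7 (vertices (i,j) for 1 ≤ i ≤ 2k+1, 0 ≤ j ≤ h, h ≥ 4k−4, as constructed there), the following order on C_i ∪ C_{i'} with i' = i + a + 1 (mod 2k+1), 0 ≤ a < k, satisfies conditions (b) and (c) of Definition 1 with E_{i,i'} = E(G): the order lists (i',0),…,(i', k+a−1), then (i,0),…,(i,a), then (i', k+a),…,(i', 2k+a−1), then (i, a+1),…,(i, k+a), and so on, alternating blocks, ending with the top of C_i. -/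
/-! Between `C_i` and `C_{i'}` every edge is a cross edge from `C_i` to `C_{i'}`: the offset
`a + 1 ≤ k` cannot also be realised in the opposite direction modulo `2k + 1`. The vertex `(i, j)`
of block `t` is joined to `(i', j')` exactly when `j' ≥ (t + 1)k + a`, and comparing the block
intervals that `lbPos` assigns on both sides shows this holds exactly when `(i', j')` comes after
`(i, j)`. So the edges between the two chains are exactly the pairs consisting of a vertex of `C_i`
and a later vertex of `C_{i'}`, and (b) and (c) follow from the transitivity of the order. -/

/-- The cross edges of the lower-bound graph: `p` in chain `i` (0-based) is joined to
`q` in chain `i + a + 1 (mod 2k+1)` when, for some `0 ≤ a < k` and `0 ≤ b < ⌊(h−a)/k⌋`,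
`(b−1)k + a < j ≤ bk + a` and `(b+1)k + a ≤ j' ≤ h`, where `j, j'` are the levels of
`p, q`. -/
def lbCross (k h : ℕ) (p q : Fin (2 * k + 1) × Fin (h + 1)) : Prop :=
  ∃ a b : ℕ, a < k ∧ b < (h - a) / k ∧
    (q.1 : ℕ) = ((p.1 : ℕ) + a + 1) % (2 * k + 1) ∧
    ((b : ℤ) - 1) * (k : ℤ) + (a : ℤ) < ((p.2 : ℕ) : ℤ) ∧
    ((p.2 : ℕ) : ℤ) ≤ (b : ℤ) * (k : ℤ) + (a : ℤ) ∧
    ((b : ℤ) + 1) * (k : ℤ) + (a : ℤ) ≤ ((q.2 : ℕ) : ℤ)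

/-- The lower-bound graph of Proposition 7: `2k+1` chains `C_i`, each inducing a clique,
together with the cross edges `lbCross`. -/
def lbGraph (k h : ℕ) : SimpleGraph (Fin (2 * k + 1) × Fin (h + 1)) :=
  SimpleGraph.fromRel (fun p q => p.1 = q.1 ∨ lbCross k h p q)


/-- The position of a vertex of `C_i ∪ C_{i'}` in the linear order of Proposition 7:
the order lists `(i',0),…,(i',k+a−1)`, then `(i,0),…,(i,a)`, then
`(i',k+a),…,(i',2k+a−1)`, then `(i,a+1),…,(i,k+a)`, and so on, alternating blocks,
ending with the top of `C_i`. -/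
def lbPos (k h a : ℕ) (i : Fin (2 * k + 1)) (p : Fin (2 * k + 1) × Fin (h + 1)) : ℕ :=
  if p.1 = i then
    -- block `t` of `C_i` is `(i, a+(t−1)k+1), …, (i, a+tk)` (block `0` is `(i,0),…,(i,a)`)
    (p.2 : ℕ) + ((if (p.2 : ℕ) ≤ a then 0 else ((p.2 : ℕ) - a - 1) / k + 1) + 1) * k + a
  else
    -- block `t` of `C_{i'}` is `(i', tk+a), …, (i', (t+1)k+a−1)` (block `0` starts at `(i',0)`)
    (p.2 : ℕ) + (if (p.2 : ℕ) < k + a then 0 else a + 1 + (((p.2 : ℕ) - a) / k - 1) * k)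

theorem Nat.eq_of_add_mod_eq_add_mod {n x c d : ℕ} (hc : c < n) (hd : d < n)
    (h : (x + c) % n = (x + d) % n) : c = d := by
  have h' : c % n = d % n := Nat.ModEq.add_left_cancel' x h
  rwa [Nat.mod_eq_of_lt hc, Nat.mod_eq_of_lt hd] at h'

section ChainIndices

variable {k : ℕ} {i i' : Fin (2 * k + 1)} {a : ℕ}

theorem chain_ne_of_shift (ha : a < k) (hi' : (i' : ℕ) = ((i : ℕ) + a + 1) % (2 * k + 1)) :
    i' ≠ i := by
  rintro rfl
  have : (i' + (a + 1)) % (2 * k + 1) = (i' + 0) % (2 * k + 1) := by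
    rw [← add_assoc, ← hi', add_zero, Nat.mod_eq_of_lt i'.isLt]
  have := Nat.eq_of_add_mod_eq_add_mod (by omega) (by omega) this
  omega

theorem shift_unique {a' : ℕ} (ha : a < k) (ha' : a' < k)
    (hi' : (i' : ℕ) = ((i : ℕ) + a + 1) % (2 * k + 1))
    (h : (i' : ℕ) = ((i : ℕ) + a' + 1) % (2 * k + 1)) : a' = a := by
  rw [h, add_assoc, add_assoc] at hi'
  have := Nat.eq_of_add_mod_eq_add_mod (by omega) (by omega) hi'
  omega

theorem not_shift_back {a' : ℕ} (ha : a < k) (ha' : a' < k)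
    (hi' : (i' : ℕ) = ((i : ℕ) + a + 1) % (2 * k + 1)) :
    (i : ℕ) ≠ ((i' : ℕ) + a' + 1) % (2 * k + 1) := by
  intro h
  have : (i + (a + a' + 2)) % (2 * k + 1) = (i + 0) % (2 * k + 1) := by
    rw [add_zero, Nat.mod_eq_of_lt i.isLt]
    conv_rhs => rw [h, hi', add_assoc, Nat.mod_add_mod]
    ring_nf
  have := Nat.eq_of_add_mod_eq_add_mod (by omega) (by omega) this
  omega

end ChainIndices

def lbBlock (k a j : ℕ) : ℕ := if j ≤ a then 0 else (j - a - 1) / k + 1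

theorem lbBlock_spec {k a : ℕ} (j : ℕ) (ha : a < k) :
    j ≤ lbBlock k a j * k + a ∧ lbBlock k a j * k + a < j + k := by
  unfold lbBlock
  split_ifs with hj
  · omega
  · have := Nat.div_add_mod' (j - a - 1) k
    have := Nat.mod_lt (j - a - 1) (by omega : 0 < k)
    rw [add_one_mul]
    omega

section BlockArithmetic

variable {k a j j' t : ℕ}

theorem exists_cross_block_iff {h : ℕ} (hk : 0 < k) (hj : j ≤ t * k + a) (hj' : t * k + a < j + k)
    (hj'h : j' ≤ h) :
    (∃ b : ℕ, b < (h - a) / k ∧ ((b : ℤ) - 1) * k + a < j ∧ (j : ℤ) ≤ b * k + a ∧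
      ((b : ℤ) + 1) * k + a ≤ j') ↔ (t + 1) * k + a ≤ j' := by
  constructor
  · rintro ⟨b, -, hlo, hhi, hj'b⟩
    have hbt : b ≤ t := by
      by_contra! htb
      have := Nat.mul_le_mul_right k (show t + 1 ≤ b by omega)
      push_cast [add_one_mul] at this ⊢
      zify at this hj
      linarith
    have htb : t ≤ b := by
      by_contra! hbt
      have := Nat.mul_le_mul_right k (show b + 1 ≤ t by omega)
      rw [add_one_mul] at this
      zify at this hj'
      linarith
    obtain rfl : b = t := le_antisymm hbt htb
    exact_mod_cast hj'b
  · intro hj't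
    refine ⟨t, ?_, ?_, by exact_mod_cast hj, by exact_mod_cast hj't⟩
    · rw [Nat.lt_iff_add_one_le, Nat.le_div_iff_mul_le hk]
      omega
    · zify at hj'
      linarith

theorem add_block_lt_iff (hk : 0 < k) (hj : j ≤ t * k + a) (hj' : t * k + a < j + k) :
    j + (t + 1) * k + a < j' + (if j' < k + a then 0 else a + 1 + ((j' - a) / k - 1) * k) ↔
      (t + 1) * k + a ≤ j' := by
  rw [add_one_mul]
  split_ifs with hj'a
  · omega
  · have := Nat.div_add_mod' (j' - a) k
    have := Nat.mod_lt (j' - a) hk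
    have hs : 1 ≤ (j' - a) / k := (Nat.le_div_iff_mul_le hk).mpr (by omega)
    rw [Nat.sub_one_mul]
    generalize (j' - a) / k = s at *
    have := Nat.le_mul_of_pos_left k hs
    rcases le_or_gt s t with hst | hts
    · have := Nat.mul_le_mul_right k hst
      omega
    · have := Nat.mul_le_mul_right k (show t + 1 ≤ s by omega)
      rw [add_one_mul] at this
      omega

end BlockArithmetic

section LowerBoundGraph

variable {k h a : ℕ} {i i' : Fin (2 * k + 1)}

theorem lbPos_of_eq {p : Fin (2 * k + 1) × Fin (h + 1)} (hp : p.1 = i) :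
    lbPos k h a i p = p.2 + (lbBlock k a p.2 + 1) * k + a :=
  if_pos hp

theorem lbPos_of_ne {p : Fin (2 * k + 1) × Fin (h + 1)} (hp : p.1 ≠ i) :
    lbPos k h a i p = p.2 +
      (if (p.2 : ℕ) < k + a then 0 else a + 1 + (((p.2 : ℕ) - a) / k - 1) * k) :=
  if_neg hp

theorem lbCross_iff {u w : Fin (2 * k + 1) × Fin (h + 1)} (ha : a < k)
    (hi' : (i' : ℕ) = ((i : ℕ) + a + 1) % (2 * k + 1)) (hu : u.1 = i) (hw : w.1 = i') :
    lbCross k h u w ↔ ∃ b : ℕ, b < (h - a) / k ∧ ((b : ℤ) - 1) * k + a < (u.2 : ℕ) ∧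
      ((u.2 : ℕ) : ℤ) ≤ b * k + a ∧ ((b : ℤ) + 1) * k + a ≤ (w.2 : ℕ) := by
  constructor
  · rintro ⟨a', b, ha', hb, hshift, hb'⟩
    rw [hu, hw] at hshift
    obtain rfl := shift_unique ha ha' hi' hshift
    exact ⟨b, hb, hb'⟩
  · rintro ⟨b, hb, hb'⟩
    exact ⟨a, b, ha, hb, hu ▸ hw ▸ hi', hb'⟩

theorem lbGraph_adj_iff_lbCross {u w : Fin (2 * k + 1) × Fin (h + 1)} (ha : a < k)
    (hi' : (i' : ℕ) = ((i : ℕ) + a + 1) % (2 * k + 1)) (hu : u.1 = i) (hw : w.1 = i') :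
    (lbGraph k h).Adj u w ↔ lbCross k h u w := by
  have hchains : u.1 ≠ w.1 := hu ▸ hw ▸ (chain_ne_of_shift ha hi').symm
  rw [lbGraph, SimpleGraph.fromRel_adj]
  constructor
  · rintro ⟨-, (hsame | hcross) | (hsame | ⟨a', -, ha', -, hback, -⟩)⟩
    · exact absurd hsame hchains
    · exact hcross
    · exact absurd hsame.symm hchains
    · rw [hu, hw] at hback
      exact absurd hback (not_shift_back ha ha' hi')
  · exact fun hcross => ⟨fun huw => hchains (congrArg Prod.fst huw), Or.inl (Or.inr hcross)⟩

theorem lbGraph_adj_iff_lbPos_lt {u w : Fin (2 * k + 1) × Fin (h + 1)} (ha : a < k)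
    (hi' : (i' : ℕ) = ((i : ℕ) + a + 1) % (2 * k + 1)) (hu : u.1 = i) (hw : w.1 = i') :
    (lbGraph k h).Adj u w ↔ lbPos k h a i u < lbPos k h a i w := by
  have hk : 0 < k := by omega
  obtain ⟨hj, hj'⟩ := lbBlock_spec (u.2 : ℕ) ha
  rw [lbGraph_adj_iff_lbCross ha hi' hu hw, lbCross_iff ha hi' hu hw,
    exists_cross_block_iff hk hj hj' (Nat.lt_succ_iff.mp w.2.isLt),
    lbPos_of_eq hu, lbPos_of_ne (hw ▸ chain_ne_of_shift ha hi'), add_block_lt_iff hk hj hj']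

theorem lbGraph_adj_iff_of_lbPos_lt {x y : Fin (2 * k + 1) × Fin (h + 1)} (ha : a < k)
    (hi' : (i' : ℕ) = ((i : ℕ) + a + 1) % (2 * k + 1))
    (hx : x.1 = i ∨ x.1 = i') (hy : y.1 = i ∨ y.1 = i') (hxy : x.1 ≠ y.1)
    (hlt : lbPos k h a i x < lbPos k h a i y) :
    (lbGraph k h).Adj x y ↔ x.1 = i := by
  rcases hx with hx | hx <;> rcases hy with hy | hy
  · exact absurd (hx.trans hy.symm) hxy
  · exact iff_of_true ((lbGraph_adj_iff_lbPos_lt ha hi' hx hy).mpr hlt) hx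
  · rw [(lbGraph k h).adj_comm, lbGraph_adj_iff_lbPos_lt ha hi' hy hx, hx]
    exact iff_of_false hlt.not_gt (chain_ne_of_shift ha hi')
  · exact absurd (hx.trans hy.symm) hxy

end LowerBoundGraph

theorem lbGraph_order_conditions_general (k h : ℕ)
    (i : Fin (2 * k + 1)) (a : ℕ) (ha : a < k)
    (i' : Fin (2 * k + 1)) (hi' : (i' : ℕ) = ((i : ℕ) + a + 1) % (2 * k + 1)) :
    -- condition (b)
    (∀ u v w : Fin (2 * k + 1) × Fin (h + 1),
      (u.1 = i ∨ u.1 = i') → (v.1 = i ∨ v.1 = i') → (w.1 = i ∨ w.1 = i') →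
      u.1 = v.1 → v.1 ≠ w.1 →
      lbPos k h a i u < lbPos k h a i v → lbPos k h a i v < lbPos k h a i w →
      (lbGraph k h).Adj u w → (lbGraph k h).Adj v w) ∧
    -- condition (c)
    (∀ u v w : Fin (2 * k + 1) × Fin (h + 1),
      (u.1 = i ∨ u.1 = i') → (v.1 = i ∨ v.1 = i') → (w.1 = i ∨ w.1 = i') →
      v.1 = w.1 → u.1 ≠ v.1 →
      lbPos k h a i u < lbPos k h a i v → lbPos k h a i v < lbPos k h a i w →
      (lbGraph k h).Adj u w → (lbGraph k h).Adj u v) := by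
  constructor
  · intro u v w hu hv hw huv hvw huv' hvw' huw
    have hui : u.1 = i :=
      (lbGraph_adj_iff_of_lbPos_lt ha hi' hu hw (huv ▸ hvw) (huv'.trans hvw')).mp huw
    exact (lbGraph_adj_iff_of_lbPos_lt ha hi' hv hw hvw hvw').mpr (huv ▸ hui)
  · intro u v w hu hv hw hvw huv huv' hvw' huw
    have hui : u.1 = i :=
      (lbGraph_adj_iff_of_lbPos_lt ha hi' hu hw (hvw ▸ huv) (huv'.trans hvw')).mp huw
    exact (lbGraph_adj_iff_of_lbPos_lt ha hi' hu hv huv huv').mpr hui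

/-- The alternating-blocks order on `C_i ∪ C_{i'}`, `i' = i + a + 1 (mod 2k+1)`,
satisfies conditions (b) and (c) of Definition 1 with `E_{i,i'} = E(G)` in the
lower-bound graph of Proposition 7. -/
theorem lbGraph_order_conditions (k h : ℕ) (hk : 1 ≤ k) (hh : 4 * k - 4 ≤ h)
    (i : Fin (2 * k + 1)) (a : ℕ) (ha : a < k)
    (i' : Fin (2 * k + 1)) (hi' : (i' : ℕ) = ((i : ℕ) + a + 1) % (2 * k + 1)) :
    -- condition (b)
    (∀ u v w : Fin (2 * k + 1) × Fin (h + 1),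
      (u.1 = i ∨ u.1 = i') → (v.1 = i ∨ v.1 = i') → (w.1 = i ∨ w.1 = i') →
      u.1 = v.1 → v.1 ≠ w.1 →
      lbPos k h a i u < lbPos k h a i v → lbPos k h a i v < lbPos k h a i w →
      (lbGraph k h).Adj u w → (lbGraph k h).Adj v w) ∧
    -- condition (c)
    (∀ u v w : Fin (2 * k + 1) × Fin (h + 1),
      (u.1 = i ∨ u.1 = i') → (v.1 = i ∨ v.1 = i') → (w.1 = i ∨ w.1 = i') →
      v.1 = w.1 → u.1 ≠ v.1 →
      lbPos k h a i u < lbPos k h a i v → lbPos k h a i v < lbPos k h a i w →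
      (lbGraph k h).Adj u w → (lbGraph k h).Adj u v) :=
  lbGraph_order_conditions_general k h i a ha i' hi'
end
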